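/- arXiv:1209.1429 — 6 statements merged into one kernel-verified Lean document; each statement's English description precedes it below -/
import Mathlib

section
/- Let ψ be an additive character of ℚ_p of conductor c, let μ be an additive Haar measure on ℚ_p, and set δ = 1 if p = 2 and δ = 0 otherwise. If f : ℚ_p → ℂ is supported on p^m ℤ_p and is constant on each additive coset of p^n ℤ_p (for integers m ≤ n), then its Fourier transform f̂(y) = ∫_{ℚ_p} ψ(2uy) f(u) dμ(u) is supported on p^(-n + c - δ) ℤ_p and is constant on each additive coset of p^(-m + c - δ) ℤ_p. -/
/-!
Translating the variable of integration by `v` multiplies `∫ ψ(2uy) f(u) du` by `ψ(2vy)` as soon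
as `f` is invariant under `v`. If `‖y‖` is large, `v = x / (2y)` with `ψ x ≠ 1` is small enough for
`f` to be invariant, so the integral vanishes. If `y - y'` is small, then on the support of `f` the
phases `ψ(2uy)` and `ψ(2uy')` differ by `ψ(2u(y - y')) = 1`.
-/

open MeasureTheory

theorem integral_eq_zero_of_add_right_eq_mul {G 𝕜 : Type*} [AddGroup G] [MeasurableSpace G]
    [MeasurableAdd G] [RCLike 𝕜] (μ : Measure G) [μ.IsAddRightInvariant] {g : G → 𝕜} {v : G}
    {χ : 𝕜} (hχ : χ ≠ 1) (hg : ∀ u, g (u + v) = χ * g u) : ∫ u, g u ∂μ = 0 := by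
  have h := integral_add_right_eq_self (μ := μ) g v
  simp only [hg, integral_const_mul] at h
  exact (mul_left_eq_self₀.mp h).resolve_left hχ

section NormedField

variable {K : Type*} [NormedField K] [MeasurableSpace K] (μ : Measure K) {ψ : K → ℂ}
  (hψ : ∀ x y, ψ (x + y) = ψ x * ψ y) {f : K → ℂ}
include hψ

theorem integral_character_mul_eq_zero_of_norm_le [MeasurableAdd K] [μ.IsAddRightInvariant]
    {r : ℝ} (hf : ∀ u v, ‖u - v‖ ≤ r → f u = f v) {x y : K} (hx : ψ x ≠ 1) (hy : 2 * y ≠ 0)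
    (hxy : ‖x‖ ≤ r * ‖2 * y‖) : ∫ u, ψ (2 * u * y) * f u ∂μ = 0 := by
  refine integral_eq_zero_of_add_right_eq_mul μ (v := x / (2 * y)) hx fun u => ?_
  have hfu : f (u + x / (2 * y)) = f u :=
    hf _ _ (by rwa [add_sub_cancel_left, norm_div, div_le_iff₀ (norm_pos_iff.mpr hy)])
  obtain ⟨h2, hy0⟩ := mul_ne_zero_iff.mp hy
  rw [hfu, show 2 * (u + x / (2 * y)) * y = x + 2 * u * y by field_simp; ring, hψ, mul_assoc]

theorem integral_character_mul_eq_of_norm_sub_le {s R : ℝ} (hψ₁ : ∀ x, ‖x‖ ≤ s → ψ x = 1)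
    (hf : ∀ u, ¬ ‖u‖ ≤ R → f u = 0) {y y' : K} (hyy' : ‖(2 : K)‖ * R * ‖y - y'‖ ≤ s) :
    ∫ u, ψ (2 * u * y) * f u ∂μ = ∫ u, ψ (2 * u * y') * f u ∂μ := by
  refine integral_congr_ae (ae_of_all μ fun u => ?_)
  by_cases hu : ‖u‖ ≤ R
  · have hψu : ψ (2 * u * (y - y')) = 1 := hψ₁ _ <| by
      rw [norm_mul, norm_mul]
      exact le_trans (by gcongr) hyy'
    simp only [show 2 * u * y = 2 * u * y' + 2 * u * (y - y') by ring, hψ, hψu, mul_one]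
  · simp only [hf u hu, mul_zero]

end NormedField

namespace Padic

variable {p : ℕ} [Fact p.Prime]

theorem norm_two : ‖(2 : ℚ_[p])‖ = (p : ℝ) ^ (-(if p = 2 then 1 else 0 : ℤ)) := by
  split_ifs with hp2
  · subst hp2
    simpa using norm_p (p := 2)
  · have hcop : p.Coprime 2 := (Nat.coprime_primes Fact.out Nat.prime_two).mpr hp2
    simpa using norm_natCast_eq_one_iff.mpr hcop

theorem zpow_add_one_le_norm_of_not_le {x : ℚ_[p]} {k : ℤ} (h : ¬ ‖x‖ ≤ (p : ℝ) ^ k) :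
    (p : ℝ) ^ (k + 1) ≤ ‖x‖ :=
  not_lt.mp ((norm_le_pow_iff_norm_lt_pow_add_one x k).not.mp h)

end Padic

theorem fourierTransform_support_and_invariance_general (p : ℕ) [Fact p.Prime]
    [MeasurableSpace ℚ_[p]] [BorelSpace ℚ_[p]]
    (ψ : ℚ_[p] → ℂ) (c : ℤ)
    (hhom : ∀ x y : ℚ_[p], ψ (x + y) = ψ x * ψ y)
    (htriv : ∀ x : ℚ_[p], ‖x‖ ≤ (p : ℝ) ^ (-c) → ψ x = 1)
    (hnontriv : ∃ x : ℚ_[p], ‖x‖ ≤ (p : ℝ) ^ (-(c - 1)) ∧ ψ x ≠ 1)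
    (μ : Measure ℚ_[p]) [μ.IsAddHaarMeasure]
    (δ : ℤ) (hδ : δ = if p = 2 then 1 else 0)
    (m n : ℤ) (f : ℚ_[p] → ℂ)
    (hsupp : ∀ u : ℚ_[p], ¬ ‖u‖ ≤ (p : ℝ) ^ (-m) → f u = 0)
    (hconst : ∀ u v : ℚ_[p], ‖u - v‖ ≤ (p : ℝ) ^ (-n) → f u = f v) :
    (∀ y : ℚ_[p], ¬ ‖y‖ ≤ (p : ℝ) ^ (-(-n + c - δ)) →
        (∫ u, ψ (2 * u * y) * f u ∂μ) = 0) ∧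
    (∀ y y' : ℚ_[p], ‖y - y'‖ ≤ (p : ℝ) ^ (-(-m + c - δ)) →
        (∫ u, ψ (2 * u * y) * f u ∂μ) = ∫ u, ψ (2 * u * y') * f u ∂μ) := by
  have hp : (p : ℝ) ≠ 0 := Nat.cast_ne_zero.mpr (Fact.out : p.Prime).ne_zero
  have h2 : ‖(2 : ℚ_[p])‖ = (p : ℝ) ^ (-δ) := hδ ▸ Padic.norm_two
  refine ⟨fun y hy => ?_, fun y y' hyy' => ?_⟩
  · obtain ⟨x, hx, hψx⟩ := hnontriv
    have hy' := Padic.zpow_add_one_le_norm_of_not_le hy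
    have hy0 : y ≠ 0 := by
      rintro rfl
      exact hy (by simp only [norm_zero]; positivity)
    refine integral_character_mul_eq_zero_of_norm_le μ hhom hconst hψx
      (mul_ne_zero two_ne_zero hy0) ?_
    calc ‖x‖ ≤ (p : ℝ) ^ (-(c - 1)) := hx
      _ = (p : ℝ) ^ (-n) * ((p : ℝ) ^ (-δ) * (p : ℝ) ^ (-(-n + c - δ) + 1)) := by
        rw [← zpow_add₀ hp, ← zpow_add₀ hp]; ring_nf
      _ ≤ (p : ℝ) ^ (-n) * ‖2 * y‖ := by rw [norm_mul, h2]; gcongr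
  · refine integral_character_mul_eq_of_norm_sub_le μ hhom htriv hsupp ?_
    calc ‖(2 : ℚ_[p])‖ * (p : ℝ) ^ (-m) * ‖y - y'‖
        ≤ (p : ℝ) ^ (-δ) * (p : ℝ) ^ (-m) * (p : ℝ) ^ (-(-m + c - δ)) := by rw [h2]; gcongr
      _ = (p : ℝ) ^ (-c) := by rw [← zpow_add₀ hp, ← zpow_add₀ hp]; ring_nf

/-- Let `ψ` be an additive character of `ℚ_p` of conductor `c`, `μ` an additive Haar
measure on `ℚ_p`, and `δ = 1` if `p = 2`, `δ = 0` otherwise.  If `f : ℚ_p → ℂ` is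
supported on `p^m ℤ_p` and constant on additive cosets of `p^n ℤ_p` (`m ≤ n`), then
its Fourier transform `f̂ y = ∫ ψ(2 u y) f u dμ(u)` is supported on
`p^(-n + c - δ) ℤ_p` and constant on additive cosets of `p^(-m + c - δ) ℤ_p`.
Here `p^k ℤ_p = {x | ‖x‖ ≤ p^(-k)}`. -/
theorem fourierTransform_support_and_invariance (p : ℕ) [Fact p.Prime]
    [MeasurableSpace ℚ_[p]] [BorelSpace ℚ_[p]]
    (ψ : ℚ_[p] → ℂ) (c : ℤ)
    (hcont : Continuous ψ)
    (hhom : ∀ x y : ℚ_[p], ψ (x + y) = ψ x * ψ y)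
    (hcircle : ∀ x : ℚ_[p], ‖ψ x‖ = 1)
    (htriv : ∀ x : ℚ_[p], ‖x‖ ≤ (p : ℝ) ^ (-c) → ψ x = 1)
    (hnontriv : ∃ x : ℚ_[p], ‖x‖ ≤ (p : ℝ) ^ (-(c - 1)) ∧ ψ x ≠ 1)
    (μ : Measure ℚ_[p]) [μ.IsAddHaarMeasure]
    (δ : ℤ) (hδ : δ = if p = 2 then 1 else 0)
    (m n : ℤ) (hmn : m ≤ n) (f : ℚ_[p] → ℂ)
    (hsupp : ∀ u : ℚ_[p], ¬ ‖u‖ ≤ (p : ℝ) ^ (-m) → f u = 0)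
    (hconst : ∀ u v : ℚ_[p], ‖u - v‖ ≤ (p : ℝ) ^ (-n) → f u = f v) :
    (∀ y : ℚ_[p], ¬ ‖y‖ ≤ (p : ℝ) ^ (-(-n + c - δ)) →
        (∫ u, ψ (2 * u * y) * f u ∂μ) = 0) ∧
    (∀ y y' : ℚ_[p], ‖y - y'‖ ≤ (p : ℝ) ^ (-(-m + c - δ)) →
        (∫ u, ψ (2 * u * y) * f u ∂μ) = ∫ u, ψ (2 * u * y') * f u ∂μ) :=
  fourierTransform_support_and_invariance_general p ψ c hhom htriv hnontriv μ δ hδ m n f hsupp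
    hconst
end

section
/- Let ψ be an additive character of ℚ₂ of conductor 1 and let μ be the additive Haar measure on ℚ₂ normalized so that μ(ℤ₂) = 1. Then for every t ∈ 2ℤ₂, ∫_{1/2 + ℤ₂} ψ(-t u²) dμ(u) = ψ(-t/4). -/
open MeasureTheory Metric

/-!
On the coset `1/2 + ℤ₂` one has `u² - 1/4 = (u - 1/2)(u + 1/2) ∈ ℤ₂`, because `u + 1/2 = (u - 1/2) + 1`.
Hence `t u² ≡ t/4 (mod 2ℤ₂)` for `t ∈ 2ℤ₂`, so the integrand is the constant `ψ(-t/4)` there,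
and the coset has measure `μ(ℤ₂) = 1` by translation invariance.
-/

theorem norm_sq_sub_sq_le_one {R : Type*} [NormedCommRing R] [IsUltrametricDist R] {u a : R}
    (hu : ‖u - a‖ ≤ 1) (ha : ‖2 * a‖ ≤ 1) : ‖u ^ 2 - a ^ 2‖ ≤ 1 := by
  have hsum : ‖u + a‖ ≤ 1 := by
    rw [show u + a = (u - a) + 2 * a by ring]
    exact (IsUltrametricDist.norm_add_le_max _ _).trans (max_le hu ha)
  calc ‖u ^ 2 - a ^ 2‖ = ‖(u - a) * (u + a)‖ := by ring_nf
    _ ≤ ‖u - a‖ * ‖u + a‖ := norm_mul_le _ _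
    _ ≤ 1 := mul_le_one₀ hu (norm_nonneg _) hsum

theorem map_neg_mul_sq_eq_of_norm_sq_sub_sq_le_one {R M : Type*} [NormedCommRing R] [Monoid M]
    {ψ : R → M} (hhom : ∀ x y, ψ (x + y) = ψ x * ψ y) {r : ℝ} (htriv : ∀ x, ‖x‖ ≤ r → ψ x = 1)
    {t u a : R} (ht : ‖t‖ ≤ r) (hua : ‖u ^ 2 - a ^ 2‖ ≤ 1) :
    ψ (-(t * u ^ 2)) = ψ (-(t * a ^ 2)) := by
  have hshift : ψ (-(t * (u ^ 2 - a ^ 2))) = 1 := by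
    refine htriv _ ?_
    rw [norm_neg]
    calc ‖t * (u ^ 2 - a ^ 2)‖ ≤ ‖t‖ * ‖u ^ 2 - a ^ 2‖ := norm_mul_le _ _
      _ ≤ r := (mul_le_of_le_one_right (norm_nonneg t) hua).trans ht
  rw [show -(t * u ^ 2) = -(t * a ^ 2) + -(t * (u ^ 2 - a ^ 2)) by ring, hhom, hshift, mul_one]

theorem integral_coset_half_general (ψ : ℚ_[2] → ℂ)
    [MeasurableSpace ℚ_[2]] [BorelSpace ℚ_[2]]
    (hhom : ∀ x y : ℚ_[2], ψ (x + y) = ψ x * ψ y)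
    (htriv : ∀ x : ℚ_[2], ‖x‖ ≤ (2 : ℝ)⁻¹ → ψ x = 1)
    (μ : Measure ℚ_[2]) [μ.IsAddHaarMeasure]
    (hμ : μ {x : ℚ_[2] | ‖x‖ ≤ 1} = 1) :
    ∀ t : ℚ_[2], ‖t‖ ≤ (2 : ℝ)⁻¹ →
      (∫ u in {u : ℚ_[2] | ‖u - 2⁻¹‖ ≤ 1}, ψ (-(t * u ^ 2)) ∂μ) = ψ (-(t / 4)) := by
  intro t ht
  have hcoset : {u : ℚ_[2] | ‖u - 2⁻¹‖ ≤ 1} = closedBall 2⁻¹ 1 := by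
    ext u; simp [dist_eq_norm]
  have hunit : {x : ℚ_[2] | ‖x‖ ≤ 1} = closedBall 0 1 := by
    ext x; simp
  have hconst : Set.EqOn (fun u => ψ (-(t * u ^ 2))) (fun _ => ψ (-(t / 4))) (closedBall 2⁻¹ 1) := by
    intro u hu
    have hsq := norm_sq_sub_sq_le_one (mem_closedBall_iff_norm.mp hu) (by norm_num)
    rw [show t / 4 = t * 2⁻¹ ^ 2 by ring]
    exact map_neg_mul_sq_eq_of_norm_sq_sub_sq_le_one hhom htriv ht hsq
  rw [hcoset, setIntegral_congr_fun measurableSet_closedBall hconst, setIntegral_const,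
    Measure.addHaar_real_closedBall_center, ← hunit, measureReal_def, hμ]
  simp

/-- Let `ψ` be an additive character of `ℚ₂` of conductor `1` and let `μ` be the
additive Haar measure on `ℚ₂` normalized so that `μ(ℤ₂) = 1`.  Then for every
`t ∈ 2ℤ₂`, `∫_{1/2 + ℤ₂} ψ(-t u²) dμ(u) = ψ(-t/4)`. -/
theorem integral_coset_half (ψ : ℚ_[2] → ℂ)
    [MeasurableSpace ℚ_[2]] [BorelSpace ℚ_[2]]
    (hcont : Continuous ψ)
    (hhom : ∀ x y : ℚ_[2], ψ (x + y) = ψ x * ψ y)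
    (hcircle : ∀ x : ℚ_[2], ‖ψ x‖ = 1)
    (htriv : ∀ x : ℚ_[2], ‖x‖ ≤ (2 : ℝ)⁻¹ → ψ x = 1)
    (hnontriv : ∃ x : ℚ_[2], ‖x‖ ≤ 1 ∧ ψ x ≠ 1)
    (μ : Measure ℚ_[2]) [μ.IsAddHaarMeasure]
    (hμ : μ {x : ℚ_[2] | ‖x‖ ≤ 1} = 1) :
    ∀ t : ℚ_[2], ‖t‖ ≤ (2 : ℝ)⁻¹ →
      (∫ u in {u : ℚ_[2] | ‖u - 2⁻¹‖ ≤ 1}, ψ (-(t * u ^ 2)) ∂μ) = ψ (-(t / 4)) :=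
  integral_coset_half_general ψ hhom htriv μ hμ
end

section
/- Let ψ be an additive character of ℚ₂ of conductor 1 and let μ be the additive Haar measure on ℚ₂ normalized so that μ(ℤ₂) = 1. Then for every t ∈ 2ℤ₂ and every y ∈ ℚ₂, ψ(y²) · ∫_{1/2 + ℤ₂} ψ(2uy) ψ(-t u²) dμ(u) = ψ(-t/4) · 1_{ℤ₂}(y). (This identity expresses that, in the Schrödinger model of the Weil representation, the element x(1)y(t)x(-1) acts on the indicator function of ℤ₂ by the scalar ψ(-t/4).) -/
/-!
Substituting `u = v + 1/2` moves the integral to `ℤ₂`, where `ψ(-t u²) = ψ(-t/4)` because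
`t (v² + v) ∈ 2ℤ₂`, and `ψ(2uy) = ψ(y) ψ(2vy)`. The remaining integral `∫_{ℤ₂} ψ(2vy)` is
`1_{ℤ₂}(y)`: for `y ∈ ℤ₂` the integrand is `1`, and otherwise translation invariance of `μ`
shows the integral is unchanged when multiplied by some `ψ(x) ≠ 1`. Finally, for `y ∈ ℤ₂`,
`ψ(y²) ψ(y) = ψ(y² + y) = 1` since `y² ≡ y mod 2`.
-/

open MeasureTheory

section Translation

variable {G : Type*} [AddGroup G] [MeasurableSpace G] [MeasurableAdd G]
  (μ : Measure G) [μ.IsAddRightInvariant]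

theorem setIntegral_preimage_add_right {E : Type*} [NormedAddCommGroup E] [NormedSpace ℝ E]
    (f : G → E) (s : Set G) (a : G) :
    ∫ x in (· + a) ⁻¹' s, f (x + a) ∂μ = ∫ x in s, f x ∂μ :=
  (measurePreserving_add_right μ a).setIntegral_preimage_emb (measurableEmbedding_addRight a) f s

-- Translating by `a ∈ H` multiplies the integral by `ψ a`.
theorem AddChar.setIntegral_addSubgroup_eq_zero (ψ : AddChar G ℂ) (H : AddSubgroup G) {a : G}
    (ha : a ∈ H) (hψa : ψ a ≠ 1) : ∫ x in (H : Set G), ψ x ∂μ = 0 := by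
  set I := ∫ x in (H : Set G), ψ x ∂μ
  have hH : (· + a) ⁻¹' (H : Set G) = H := by ext x; simp [H.add_mem_cancel_right ha]
  have hI : I = I * ψ a := by
    calc I = ∫ x in (· + a) ⁻¹' (H : Set G), ψ (x + a) ∂μ :=
          (setIntegral_preimage_add_right μ ψ _ a).symm
      _ = ∫ x in (H : Set G), ψ (x + a) ∂μ := by rw [hH]
      _ = I * ψ a := by simp_rw [ψ.map_add_eq_mul]; exact integral_mul_const _ _
  have : I * (1 - ψ a) = 0 := by rw [mul_sub, mul_one, ← hI, sub_self]
  exact (mul_eq_zero.1 this).resolve_right (sub_ne_zero.2 hψa.symm)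

end Translation

namespace Padic

variable {p : ℕ} [Fact p.Prime]

theorem norm_lt_one_iff_le_inv (x : ℚ_[p]) : ‖x‖ < 1 ↔ ‖x‖ ≤ (p : ℝ)⁻¹ := by
  simpa using norm_lt_pow_iff_norm_le_pow_sub_one x 0

theorem one_lt_norm_iff (x : ℚ_[p]) : 1 < ‖x‖ ↔ (p : ℝ) ≤ ‖x‖ := by
  simpa using (norm_le_pow_iff_norm_lt_pow_add_one x 0).not

theorem norm_pow_sub_self_le {y : ℚ_[p]} (hy : ‖y‖ ≤ 1) : ‖y ^ p - y‖ ≤ (p : ℝ)⁻¹ := by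
  obtain ⟨z, rfl⟩ : ∃ z : ℤ_[p], (z : ℚ_[p]) = y := ⟨⟨y, hy⟩, rfl⟩
  have hker : z ^ p - z ∈ RingHom.ker PadicInt.toZMod := by
    simp [RingHom.mem_ker, ZMod.pow_card]
  rw [PadicInt.ker_toZMod, PadicInt.maximalIdeal_eq_span_p, Ideal.mem_span_singleton,
    ← PadicInt.norm_lt_one_iff_dvd] at hker
  rw [← norm_lt_one_iff_le_inv]
  exact_mod_cast hker

theorem norm_sq_add_self_le {y : ℚ_[2]} (hy : ‖y‖ ≤ 1) : ‖y ^ 2 + y‖ ≤ (2 : ℝ)⁻¹ := by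
  have hfermat : ‖y ^ 2 - y‖ ≤ (2 : ℝ)⁻¹ := by exact_mod_cast norm_pow_sub_self_le (p := 2) hy
  have h2y : ‖2 * y‖ ≤ (2 : ℝ)⁻¹ := by
    rw [norm_mul]
    have h2 : ‖(2 : ℚ_[2])‖ = (2 : ℝ)⁻¹ := by exact_mod_cast norm_p (p := 2)
    rw [h2]
    nlinarith [norm_nonneg y]
  calc ‖y ^ 2 + y‖ = ‖(y ^ 2 - y) + 2 * y‖ := by ring_nf
    _ ≤ max ‖y ^ 2 - y‖ ‖2 * y‖ := nonarchimedean _ _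
    _ ≤ (2 : ℝ)⁻¹ := max_le hfermat h2y

theorem setIntegral_addChar_p_mul_eq_indicator [MeasurableSpace ℚ_[p]] [BorelSpace ℚ_[p]]
    (ψ : AddChar ℚ_[p] ℂ) (htriv : ∀ x : ℚ_[p], ‖x‖ ≤ (p : ℝ)⁻¹ → ψ x = 1)
    (hnontriv : ∃ x : ℚ_[p], ‖x‖ ≤ 1 ∧ ψ x ≠ 1)
    (μ : Measure ℚ_[p]) [μ.IsAddRightInvariant] (hμ : μ {x : ℚ_[p] | ‖x‖ ≤ 1} = 1)
    (y : ℚ_[p]) :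
    ∫ v in {v : ℚ_[p] | ‖v‖ ≤ 1}, ψ (p * v * y) ∂μ =
      Set.indicator {x : ℚ_[p] | ‖x‖ ≤ 1} (fun _ => (1 : ℂ)) y := by
  by_cases hy : ‖y‖ ≤ 1
  · have hone : Set.EqOn (fun v => ψ (p * v * y)) (fun _ => 1) {v : ℚ_[p] | ‖v‖ ≤ 1} := by
      intro v (hv : ‖v‖ ≤ 1)
      refine htriv _ ?_
      calc ‖(p : ℚ_[p]) * v * y‖ = (p : ℝ)⁻¹ * ‖v‖ * ‖y‖ := by rw [norm_mul, norm_mul, norm_p]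
        _ ≤ (p : ℝ)⁻¹ * 1 * 1 := by gcongr
        _ = (p : ℝ)⁻¹ := by ring
    rw [setIntegral_congr_fun (measurableSet_le measurable_norm measurable_const) hone,
      Set.indicator_of_mem (show y ∈ {x : ℚ_[p] | ‖x‖ ≤ 1} from hy)]
    simp [Measure.real, hμ]
  · obtain ⟨x, hx, hψx⟩ := hnontriv
    have hp0 : p ≠ 0 := (Fact.out : p.Prime).ne_zero
    have hpy : (p : ℚ_[p]) * y ≠ 0 := by
      refine mul_ne_zero (Nat.cast_ne_zero.2 hp0) ?_
      rintro rfl; simp at hy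
    let χ := ψ.compAddMonoidHom (AddMonoidHom.mulRight ((p : ℚ_[p]) * y))
    have hχ : (fun v => ψ (p * v * y)) = χ := by
      funext v; simp only [χ, AddChar.compAddMonoidHom_apply, AddMonoidHom.coe_mulRight]; ring_nf
    rw [hχ, Set.indicator_of_notMem (show y ∉ {x : ℚ_[p] | ‖x‖ ≤ 1} from hy)]
    refine χ.setIntegral_addSubgroup_eq_zero μ (PadicInt.subring p).toAddSubgroup
      (a := x / (p * y)) ?_ ?_
    · have hp : (p : ℝ) ≤ ‖y‖ := (one_lt_norm_iff y).1 (not_le.1 hy)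
      show ‖x / (p * y)‖ ≤ 1
      rw [norm_div, div_le_one (norm_pos_iff.2 hpy), norm_mul, norm_p]
      calc ‖x‖ ≤ 1 := hx
        _ = (p : ℝ)⁻¹ * p := (inv_mul_cancel₀ (Nat.cast_ne_zero.2 hp0)).symm
        _ ≤ (p : ℝ)⁻¹ * ‖y‖ := by gcongr
    · show ψ (x / (p * y) * (p * y)) ≠ 1
      rwa [div_mul_cancel₀ _ hpy]

theorem addChar_weil_integrand_add_half (ψ : AddChar ℚ_[2] ℂ)
    (htriv : ∀ x : ℚ_[2], ‖x‖ ≤ (2 : ℝ)⁻¹ → ψ x = 1) {t : ℚ_[2]} (ht : ‖t‖ ≤ (2 : ℝ)⁻¹)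
    (y : ℚ_[2]) {v : ℚ_[2]} (hv : ‖v‖ ≤ 1) :
    ψ (2 * (v + 2⁻¹) * y) * ψ (-(t * (v + 2⁻¹) ^ 2)) = ψ y * ψ (-(t / 4)) * ψ (2 * v * y) := by
  have hvv : ‖v ^ 2 + v‖ ≤ 1 := (PadicInt.subring 2).add_mem (pow_mem hv 2) hv
  have hsmall : ψ (-(t * (v ^ 2 + v))) = 1 := by
    refine htriv _ ?_
    rw [norm_neg, norm_mul]
    simpa using mul_le_mul ht hvv (norm_nonneg _) (by norm_num)
  calc ψ (2 * (v + 2⁻¹) * y) * ψ (-(t * (v + 2⁻¹) ^ 2))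
      = ψ (2 * v * y + y) * ψ (-(t * (v ^ 2 + v)) + -(t / 4)) := by congr 2 <;> ring
    _ = ψ y * ψ (-(t / 4)) * ψ (2 * v * y) := by
      rw [ψ.map_add_eq_mul, ψ.map_add_eq_mul, hsmall]; ring

end Padic

theorem weil_action_on_indicator_general (ψ : ℚ_[2] → ℂ)
    [MeasurableSpace ℚ_[2]] [BorelSpace ℚ_[2]]
    (hhom : ∀ x y : ℚ_[2], ψ (x + y) = ψ x * ψ y)
    (htriv : ∀ x : ℚ_[2], ‖x‖ ≤ (2 : ℝ)⁻¹ → ψ x = 1)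
    (hnontriv : ∃ x : ℚ_[2], ‖x‖ ≤ 1 ∧ ψ x ≠ 1)
    (μ : Measure ℚ_[2]) [μ.IsAddHaarMeasure]
    (hμ : μ {x : ℚ_[2] | ‖x‖ ≤ 1} = 1) :
    ∀ t : ℚ_[2], ‖t‖ ≤ (2 : ℝ)⁻¹ → ∀ y : ℚ_[2],
      ψ (y ^ 2) * ∫ u in {u : ℚ_[2] | ‖u - 2⁻¹‖ ≤ 1}, ψ (2 * u * y) * ψ (-(t * u ^ 2)) ∂μ =
        ψ (-(t / 4)) * Set.indicator {x : ℚ_[2] | ‖x‖ ≤ 1} (fun _ => (1 : ℂ)) y := by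
  intro t ht y
  let χ : AddChar ℚ_[2] ℂ := ⟨ψ, htriv 0 (by simp), hhom⟩
  have hχtriv : ∀ x : ℚ_[2], ‖x‖ ≤ (2 : ℝ)⁻¹ → χ x = 1 := htriv
  have hfourier := Padic.setIntegral_addChar_p_mul_eq_indicator χ (by exact_mod_cast hχtriv)
    hnontriv μ hμ y
  push_cast at hfourier
  have hcoset : (· + 2⁻¹) ⁻¹' {u : ℚ_[2] | ‖u - 2⁻¹‖ ≤ 1} = {v | ‖v‖ ≤ 1} := by ext; simp
  change χ (y ^ 2) * ∫ u in _, χ (2 * u * y) * χ (-(t * u ^ 2)) ∂μ = χ (-(t / 4)) * _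
  rw [← setIntegral_preimage_add_right μ _ _ 2⁻¹, hcoset,
    setIntegral_congr_fun (measurableSet_le measurable_norm measurable_const)
      fun v hv => Padic.addChar_weil_integrand_add_half χ hχtriv ht y hv,
    integral_const_mul, hfourier]
  by_cases hy : ‖y‖ ≤ 1
  · rw [Set.indicator_of_mem (show y ∈ {x : ℚ_[2] | ‖x‖ ≤ 1} from hy), ← mul_assoc, ← mul_assoc,
      ← χ.map_add_eq_mul, hχtriv _ (Padic.norm_sq_add_self_le hy)]
    ring
  · simp [hy]

/-- Let `ψ` be an additive character of `ℚ₂` of conductor `1` and `μ` the additive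
Haar measure with `μ(ℤ₂) = 1`.  Then for every `t ∈ 2ℤ₂` and every `y ∈ ℚ₂`,
`ψ(y²) · ∫_{1/2 + ℤ₂} ψ(2uy) ψ(-t u²) dμ(u) = ψ(-t/4) · 1_{ℤ₂}(y)`:
in the Schrödinger model of the Weil representation, `x(1)y(t)x(-1)` acts on the
indicator function of `ℤ₂` by the scalar `ψ(-t/4)`. -/
theorem weil_action_on_indicator (ψ : ℚ_[2] → ℂ)
    [MeasurableSpace ℚ_[2]] [BorelSpace ℚ_[2]]
    (hcont : Continuous ψ)
    (hhom : ∀ x y : ℚ_[2], ψ (x + y) = ψ x * ψ y)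
    (hcircle : ∀ x : ℚ_[2], ‖ψ x‖ = 1)
    (htriv : ∀ x : ℚ_[2], ‖x‖ ≤ (2 : ℝ)⁻¹ → ψ x = 1)
    (hnontriv : ∃ x : ℚ_[2], ‖x‖ ≤ 1 ∧ ψ x ≠ 1)
    (μ : Measure ℚ_[2]) [μ.IsAddHaarMeasure]
    (hμ : μ {x : ℚ_[2] | ‖x‖ ≤ 1} = 1) :
    ∀ t : ℚ_[2], ‖t‖ ≤ (2 : ℝ)⁻¹ → ∀ y : ℚ_[2],
      ψ (y ^ 2) * ∫ u in {u : ℚ_[2] | ‖u - 2⁻¹‖ ≤ 1}, ψ (2 * u * y) * ψ (-(t * u ^ 2)) ∂μ =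
        ψ (-(t / 4)) * Set.indicator {x : ℚ_[2] | ‖x‖ ≤ 1} (fun _ => (1 : ℂ)) y :=
  weil_action_on_indicator_general ψ hhom htriv hnontriv μ hμ
end

section
/- Let ψ be an additive character of ℚ₂ of conductor 1, let μ be the additive Haar measure on ℚ₂ with μ(ℤ₂) = 1, and let φ : ℚ₂ → ℂ be a locally constant function with compact support. Define the Fourier transform φ̂(y) = ∫_{ℚ₂} ψ(2uy) φ(u) dμ(u). If ψ(2y²) φ(y) = φ(y) for all y ∈ ℚ₂ and ψ(2y²) φ̂(y) = φ̂(y) for all y ∈ ℚ₂, then φ is a scalar multiple of the indicator function of ℤ₂. -/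
/-!
Write `e = ψ(2 ·)`. A character of conductor one of `ℚ₂` equals `-1` on the units, so the kernel
of `e` is exactly `ℤ₂`; hence `e(y²) ≠ 1` when `‖y‖ > 1`, and the two invariance conditions force
`φ` and `φ̂` to vanish outside `ℤ₂`. If `φ` is constant on `x + 2^N ℤ₂`, Fourier inversion
truncated to `2^{-N} ℤ₂` reads `μ(2^{-N} ℤ₂) μ(2^N ℤ₂) φ(x) = ∫_{2^{-N} ℤ₂} e(-xy) φ̂(y) dy`.
For `x ∈ ℤ₂` the character `e(-x ·)` is trivial on the support of `φ̂`, so the right-hand side is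
`∫_{ℤ₂} φ̂`, independent of `x`: `φ` is constant on `ℤ₂`.
-/

open MeasureTheory Metric

lemma AddChar.setIntegral_addSubgroup_eq_zero_s8 {G : Type*} [AddGroup G] [MeasurableSpace G]
    [MeasurableAdd G] (μ : Measure G) [μ.IsAddRightInvariant] (χ : AddChar G ℂ)
    {H : AddSubgroup G} (hH : MeasurableSet (H : Set G)) {a : G} (ha : a ∈ H) (hχa : χ a ≠ 1) :
    ∫ y in H, χ y ∂μ = 0 := by
  set f := (H : Set G).indicator χ
  have hshift : ∀ y, f (y + a) = χ a * f y := by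
    intro y
    by_cases hy : y ∈ H
    · simp [f, hy, H.add_mem hy ha, map_add_eq_mul, mul_comm]
    · have : y + a ∉ H := fun h => hy (by simpa using H.sub_mem h ha)
      simp [f, hy, this]
  have h := integral_add_right_eq_self f a (μ := μ)
  simp_rw [hshift, integral_const_mul] at h
  rw [← integral_indicator hH]
  by_contra hI
  exact hχa ((mul_eq_right₀ hI).1 h)

lemma IsUltrametricDist.measureReal_closedBall_pos {E : Type*} [NormedAddCommGroup E]
    [IsUltrametricDist E] [ProperSpace E] [MeasurableSpace E] (μ : Measure E)
    [μ.IsAddHaarMeasure] {r : ℝ} (hr : 0 < r) : 0 < μ.real (closedBall (0 : E) r) :=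
  ENNReal.toReal_pos
    ((isOpen_closedBall 0 hr.ne').measure_ne_zero μ ⟨0, mem_closedBall_self hr.le⟩)
    (isCompact_closedBall 0 r).measure_lt_top.ne

namespace Padic

section General

variable {p : ℕ} [Fact p.Prime]

noncomputable def fourierTransform [MeasurableSpace ℚ_[p]] (e : AddChar ℚ_[p] ℂ)
    (μ : Measure ℚ_[p]) (h : ℚ_[p] → ℂ) (y : ℚ_[p]) : ℂ :=
  ∫ u, e (u * y) * h u ∂μ

lemma _root_.IsLocallyConstant.eventually_forall_closedBall_zpow {α : Type*} {h : ℚ_[p] → α}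
    (hlc : IsLocallyConstant h) (x : ℚ_[p]) :
    ∀ᶠ N : ℤ in Filter.atTop, ∀ u ∈ closedBall x ((p : ℝ) ^ (-N)), h u = h x := by
  obtain ⟨ε, hε, hball⟩ := Metric.isOpen_iff.1 (hlc.isOpen_fiber (h x)) x rfl
  have hp : (1 : ℝ) < p := Nat.one_lt_cast.2 (Fact.out : p.Prime).one_lt
  obtain ⟨n, hn⟩ := exists_pow_lt_of_lt_one hε (inv_lt_one_of_one_lt₀ hp)
  refine Filter.eventually_atTop.2 ⟨n, fun N hN u hu => hball (closedBall_subset_ball ?_ hu)⟩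
  calc (p : ℝ) ^ (-N) ≤ (p : ℝ) ^ (-(n : ℤ)) := zpow_le_zpow_right₀ hp.le (by omega)
    _ = (p : ℝ)⁻¹ ^ n := by rw [zpow_neg, zpow_natCast, inv_pow]
    _ < ε := hn

variable {e : AddChar ℚ_[p] ℂ} (he : ∀ z, e z = 1 ↔ ‖z‖ ≤ 1)
include he

lemma norm_addChar_eq_one (z : ℚ_[p]) : ‖e z‖ = 1 := by
  have hsmall : ∀ᶠ k in Filter.atTop, (p : ℚ_[p]) ^ k * z ∈ closedBall 0 1 := by
    refine Filter.Tendsto.eventually_mem ?_ (closedBall_mem_nhds 0 one_pos)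
    simpa using (tendsto_pow_atTop_nhds_zero_of_norm_lt_one norm_p_lt_one).mul_const z
  obtain ⟨k, hk⟩ := hsmall.exists
  have hpow : e z ^ p ^ k = 1 := by
    rw [← AddChar.map_nsmul_eq_pow, nsmul_eq_mul, (he _).2 (by simpa using hk)]
  have hk0 : p ^ k ≠ 0 := pow_ne_zero k (Fact.out : p.Prime).ne_zero
  exact (pow_eq_one_iff_of_nonneg (norm_nonneg _) hk0).1 (by rw [← norm_pow, hpow, norm_one])

lemma continuous_addChar : Continuous e := by
  refine continuous_iff_continuousAt.2 fun z => (continuousAt_const (y := e z)).congr ?_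
  filter_upwards [closedBall_mem_nhds z one_pos] with w hw
  rw [mem_closedBall, dist_eq_norm] at hw
  rw [← add_sub_cancel z w, AddChar.map_add_eq_mul, (he _).2 hw, mul_one]

lemma eq_zero_of_addChar_sq_mul_eq_self {g : ℚ_[p] → ℂ} (hg : ∀ y, e (y ^ 2) * g y = g y)
    {y : ℚ_[p]} (hy : 1 < ‖y‖) : g y = 0 := by
  have hne : e (y ^ 2) ≠ 1 := by
    rw [Ne, he, norm_pow, not_le]
    exact one_lt_pow₀ hy two_ne_zero
  by_contra h0
  exact hne ((mul_eq_right₀ h0).1 (hg y))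

variable [MeasurableSpace ℚ_[p]] [BorelSpace ℚ_[p]] (μ : Measure ℚ_[p]) [μ.IsAddHaarMeasure]

lemma setIntegral_closedBall_addChar_mul (c : ℚ_[p]) (N : ℤ) :
    ∫ y in closedBall 0 ((p : ℝ) ^ N), e (c * y) ∂μ =
      if ‖c‖ ≤ (p : ℝ) ^ (-N) then μ.real (closedBall 0 ((p : ℝ) ^ N)) else 0 := by
  have hp : (0 : ℝ) < p := Nat.cast_pos.2 (Fact.out : p.Prime).pos
  have hNN : (p : ℝ) ^ (-N) * (p : ℝ) ^ N = 1 := by rw [← zpow_add₀ hp.ne']; simp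
  split_ifs with hc
  · rw [setIntegral_congr_fun measurableSet_closedBall (g := fun _ => 1), setIntegral_const,
      Complex.real_smul, mul_one]
    intro y hy
    refine (he _).2 ?_
    rw [mem_closedBall, dist_zero_right] at hy
    calc ‖c * y‖ = ‖c‖ * ‖y‖ := norm_mul c y
      _ ≤ (p : ℝ) ^ (-N) * (p : ℝ) ^ N := by gcongr
      _ = 1 := hNN
  · have ha : ‖(p : ℚ_[p]) ^ (-N)‖ = (p : ℝ) ^ N := by rw [norm_p_zpow, neg_neg]
    refine AddChar.setIntegral_addSubgroup_eq_zero_s8 μ (e.mulShift c)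
      (H := (IsUltrametricDist.closedBall_openAddSubgroup ℚ_[p] (zpow_pos hp N)).toAddSubgroup)
      measurableSet_closedBall (a := (p : ℚ_[p]) ^ (-N))
      (show _ ∈ closedBall (0 : ℚ_[p]) _ by rw [mem_closedBall, dist_zero_right, ha]) ?_
    rw [AddChar.mulShift_apply, Ne, he, norm_mul, ha, not_le]
    calc (1 : ℝ) = (p : ℝ) ^ (-N) * (p : ℝ) ^ N := hNN.symm
      _ < ‖c‖ * (p : ℝ) ^ N := by gcongr; exact not_le.1 hc

lemma setIntegral_closedBall_mul_fourierTransform {h : ℚ_[p] → ℂ} (hcont : Continuous h)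
    (hcs : HasCompactSupport h) {x : ℚ_[p]} {N : ℤ}
    (hx : ∀ u ∈ closedBall x ((p : ℝ) ^ (-N)), h u = h x) :
    ∫ y in closedBall 0 ((p : ℝ) ^ N), e (-(x * y)) * fourierTransform e μ h y ∂μ =
      (μ.real (closedBall 0 ((p : ℝ) ^ N)) * μ.real (closedBall 0 ((p : ℝ) ^ (-N))) : ℝ) *
        h x := by
  set B := closedBall (0 : ℚ_[p]) ((p : ℝ) ^ N)
  set D := closedBall x ((p : ℝ) ^ (-N))
  have hmerge : ∀ y, e (-(x * y)) * fourierTransform e μ h y =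
      ∫ u, e ((u - x) * y) * h u ∂μ := by
    intro y
    rw [fourierTransform, ← integral_const_mul]
    congr 1 with u
    rw [← mul_assoc, ← AddChar.map_add_eq_mul]
    ring_nf
  have hint : Integrable (Function.uncurry fun y u => e ((u - x) * y) * h u)
      ((μ.restrict B).prod μ) := by
    have : IsFiniteMeasure (μ.restrict B) :=
      isFiniteMeasure_restrict.2 (isCompact_closedBall 0 _).measure_lt_top.ne
    refine Integrable.mono' ((integrable_const (1 : ℝ)).mul_prod
      (hcont.integrable_of_hasCompactSupport hcs).norm) ?_ (.of_forall fun ⟨y, u⟩ => ?_)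
    · exact ((continuous_addChar he).comp (by fun_prop)).mul (hcont.comp continuous_snd)
        |>.aestronglyMeasurable
    · simp [norm_addChar_eq_one he]
  have hinner : ∀ u, ∫ y in B, e ((u - x) * y) * h u ∂μ = (μ.real B : ℂ) * D.indicator h u := by
    intro u
    rw [integral_mul_const, setIntegral_closedBall_addChar_mul he μ]
    simp only [D, Set.indicator, mem_closedBall, dist_eq_norm]
    split_ifs <;> simp [B]
  simp_rw [hmerge]
  rw [integral_integral_swap hint]
  simp_rw [hinner]
  rw [integral_const_mul, integral_indicator measurableSet_closedBall,
    setIntegral_congr_fun measurableSet_closedBall hx, setIntegral_const,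
    Measure.addHaar_real_closedBall_center μ x, Complex.real_smul]
  push_cast
  ring

lemma measureReal_mul_eq_setIntegral_fourierTransform {h : ℚ_[p] → ℂ} (hcont : Continuous h)
    (hcs : HasCompactSupport h) (hsupp : ∀ y, 1 < ‖y‖ → fourierTransform e μ h y = 0)
    {x : ℚ_[p]} (hx : ‖x‖ ≤ 1) {N : ℤ} (hN : 0 ≤ N)
    (hloc : ∀ u ∈ closedBall x ((p : ℝ) ^ (-N)), h u = h x) :
    (μ.real (closedBall 0 ((p : ℝ) ^ N)) * μ.real (closedBall 0 ((p : ℝ) ^ (-N))) : ℝ) * h x =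
      ∫ y in closedBall 0 1, fourierTransform e μ h y ∂μ := by
  have hp : (1 : ℝ) ≤ p := Nat.one_le_cast.2 (Fact.out : p.Prime).one_lt.le
  rw [← setIntegral_closedBall_mul_fourierTransform he μ hcont hcs hloc,
    setIntegral_eq_of_subset_of_forall_sdiff_eq_zero measurableSet_closedBall
      (closedBall_subset_closedBall (one_le_zpow₀ hp hN))]
  · refine setIntegral_congr_fun measurableSet_closedBall fun y hy => ?_
    rw [mem_closedBall, dist_zero_right] at hy
    rw [(he _).2 (by simpa using mul_le_one₀ hx (norm_nonneg y) hy), one_mul]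
  · rintro y ⟨-, hy⟩
    rw [mem_closedBall, dist_zero_right, not_le] at hy
    rw [hsupp y hy, mul_zero]

lemma eq_apply_zero_of_fourierTransform_eq_zero {h : ℚ_[p] → ℂ} (hlc : IsLocallyConstant h)
    (hcs : HasCompactSupport h) (hsupp : ∀ y, 1 < ‖y‖ → fourierTransform e μ h y = 0)
    {x : ℚ_[p]} (hx : ‖x‖ ≤ 1) : h x = h 0 := by
  obtain ⟨N, hN, hNx, hN0⟩ := ((Filter.eventually_ge_atTop 0).and
    ((hlc.eventually_forall_closedBall_zpow x).and
      (hlc.eventually_forall_closedBall_zpow 0))).exists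
  have hp : (0 : ℝ) < p := Nat.cast_pos.2 (Fact.out : p.Prime).pos
  have hc : ((μ.real (closedBall 0 ((p : ℝ) ^ N)) * μ.real (closedBall 0 ((p : ℝ) ^ (-N))) : ℝ)
      : ℂ) ≠ 0 :=
    Complex.ofReal_ne_zero.2 <| ne_of_gt <| mul_pos
      (IsUltrametricDist.measureReal_closedBall_pos μ (zpow_pos hp N))
      (IsUltrametricDist.measureReal_closedBall_pos μ (zpow_pos hp (-N)))
  refine mul_left_cancel₀ hc ?_
  rw [measureReal_mul_eq_setIntegral_fourierTransform he μ hlc.continuous hcs hsupp hx hN hNx,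
    measureReal_mul_eq_setIntegral_fourierTransform he μ hlc.continuous hcs hsupp (by simp) hN hN0]

end General

section ConductorOne

lemma norm_two_eq_inv_two : ‖(2 : ℚ_[2])‖ = 2⁻¹ := by
  simpa using norm_p (p := 2)

lemma norm_sub_one_le_inv_two {u : ℚ_[2]} (hu : ‖u‖ = 1) : ‖u - 1‖ ≤ 2⁻¹ := by
  obtain ⟨z, rfl⟩ : ∃ z : ℤ_[2], (z : ℚ_[2]) = u := ⟨⟨u, hu.le⟩, rfl⟩
  obtain ⟨n, hn2, hn⟩ := PadicInt.exists_mem_range z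
  rw [IsLocalRing.mem_maximalIdeal, PadicInt.mem_nonunits, PadicInt.norm_def] at hn
  interval_cases n
  · simp [hu] at hn
  · simpa using (norm_le_pow_iff_norm_lt_pow_add_one (p := 2) (z - 1) (-1)).2 (by simpa using hn)

variable {χ : AddChar ℚ_[2] ℂ} (htriv : ∀ x : ℚ_[2], ‖x‖ ≤ 2⁻¹ → χ x = 1)
include htriv

lemma addChar_apply_eq_addChar_one {u : ℚ_[2]} (hu : ‖u‖ = 1) : χ u = χ 1 := by
  rw [← add_sub_cancel 1 u, AddChar.map_add_eq_mul, htriv _ (norm_sub_one_le_inv_two hu), mul_one]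

lemma addChar_one_eq_neg_one (hnontriv : ∃ x : ℚ_[2], ‖x‖ ≤ 1 ∧ χ x ≠ 1) : χ 1 = -1 := by
  obtain ⟨x, hx1, hχx⟩ := hnontriv
  have hx : ‖x‖ = 1 := by
    refine le_antisymm hx1 ?_
    have := (norm_le_pow_iff_norm_lt_pow_add_one (p := 2) x (-1)).not.1
      fun h => hχx (htriv x (by simpa using h))
    simpa using this
  have hsq : χ 1 ^ 2 = 1 := by
    rw [← AddChar.map_nsmul_eq_pow, htriv]
    simp [norm_two_eq_inv_two]
  rw [addChar_apply_eq_addChar_one htriv hx] at hχx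
  exact (sq_eq_one_iff.1 hsq).resolve_left hχx

lemma addChar_apply_eq_one_iff (hnontriv : ∃ x : ℚ_[2], ‖x‖ ≤ 1 ∧ χ x ≠ 1) {z : ℚ_[2]} :
    χ z = 1 ↔ ‖z‖ ≤ 2⁻¹ := by
  refine ⟨fun hz => ?_, htriv z⟩
  by_contra hlarge
  have hz0 : z ≠ 0 := by rintro rfl; simp at hlarge
  obtain ⟨n, hn⟩ : ∃ n : ℕ, -z.valuation = n := by
    refine Int.eq_ofNat_of_zero_le ?_
    have h1 := (norm_le_pow_iff_norm_lt_pow_add_one (p := 2) z (-1)).not.1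
      (by simpa using hlarge)
    rw [norm_eq_zpow_neg_valuation hz0, not_lt] at h1
    exact (one_le_zpow_iff_right₀ (by norm_num : (1 : ℝ) < 2)).1 (by simpa using h1)
  have hunit : ‖(2 : ℚ_[2]) ^ n * z‖ = 1 := by
    rw [norm_mul, norm_pow, norm_two_eq_inv_two, norm_eq_zpow_neg_valuation hz0, hn]
    simp
  have h := addChar_apply_eq_addChar_one htriv hunit
  have hsmul : (2 : ℚ_[2]) ^ n * z = (2 ^ n) • z := by simp [nsmul_eq_mul]
  rw [addChar_one_eq_neg_one htriv hnontriv, hsmul, AddChar.map_nsmul_eq_pow, hz, one_pow] at h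
  norm_num at h

end ConductorOne

end Padic

theorem invariant_vector_is_indicator_general (ψ : ℚ_[2] → ℂ)
    [MeasurableSpace ℚ_[2]] [BorelSpace ℚ_[2]]
    (hhom : ∀ x y : ℚ_[2], ψ (x + y) = ψ x * ψ y)
    (htriv : ∀ x : ℚ_[2], ‖x‖ ≤ (2 : ℝ)⁻¹ → ψ x = 1)
    (hnontriv : ∃ x : ℚ_[2], ‖x‖ ≤ 1 ∧ ψ x ≠ 1)
    (μ : Measure ℚ_[2]) [μ.IsAddHaarMeasure]
    (φ : ℚ_[2] → ℂ) (hlc : IsLocallyConstant φ) (hcs : HasCompactSupport φ)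
    (hx : ∀ y : ℚ_[2], ψ (2 * y ^ 2) * φ y = φ y)
    (hy : ∀ y : ℚ_[2],
      ψ (2 * y ^ 2) * (∫ u, ψ (2 * u * y) * φ u ∂μ) = ∫ u, ψ (2 * u * y) * φ u ∂μ) :
    ∃ a : ℂ, φ = fun y => a * Set.indicator {x : ℚ_[2] | ‖x‖ ≤ 1} (fun _ => (1 : ℂ)) y := by
  let χ : AddChar ℚ_[2] ℂ := ⟨ψ, htriv 0 (by simp), hhom⟩
  let e := χ.mulShift 2
  have he : ∀ z, e z = 1 ↔ ‖z‖ ≤ 1 := fun z => by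
    rw [AddChar.mulShift_apply, Padic.addChar_apply_eq_one_iff htriv hnontriv, norm_mul,
      Padic.norm_two_eq_inv_two]
    exact mul_le_iff_le_one_right (by norm_num)
  have hφ : ∀ y, 1 < ‖y‖ → φ y = 0 := fun y => Padic.eq_zero_of_addChar_sq_mul_eq_self he hx
  have he_apply : ∀ z, e z = ψ (2 * z) := fun _ => rfl
  have hφ' : ∀ y, 1 < ‖y‖ → Padic.fourierTransform e μ φ y = 0 := fun y =>
    Padic.eq_zero_of_addChar_sq_mul_eq_self he (g := Padic.fourierTransform e μ φ)
      (fun y => by simpa only [Padic.fourierTransform, he_apply, mul_assoc] using hy y)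
  refine ⟨φ 0, funext fun y => ?_⟩
  by_cases hy1 : ‖y‖ ≤ 1
  · simp [hy1, Padic.eq_apply_zero_of_fourierTransform_eq_zero he μ hlc hcs hφ' hy1]
  · simp [hy1, hφ y (not_le.1 hy1)]

/-- Let `ψ` be an additive character of `ℚ₂` of conductor `1`, `μ` the additive Haar
measure with `μ(ℤ₂) = 1`, and `φ : ℚ₂ → ℂ` a locally constant compactly supported
(i.e. Schwartz) function, with Fourier transform `φ̂ y = ∫ ψ(2uy) φ u dμ(u)`.
If `ψ(2y²) φ y = φ y` and `ψ(2y²) φ̂ y = φ̂ y` for all `y`, then `φ` is a scalar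
multiple of the indicator function of `ℤ₂`. -/
theorem invariant_vector_is_indicator (ψ : ℚ_[2] → ℂ)
    [MeasurableSpace ℚ_[2]] [BorelSpace ℚ_[2]]
    (hcont : Continuous ψ)
    (hhom : ∀ x y : ℚ_[2], ψ (x + y) = ψ x * ψ y)
    (hcircle : ∀ x : ℚ_[2], ‖ψ x‖ = 1)
    (htriv : ∀ x : ℚ_[2], ‖x‖ ≤ (2 : ℝ)⁻¹ → ψ x = 1)
    (hnontriv : ∃ x : ℚ_[2], ‖x‖ ≤ 1 ∧ ψ x ≠ 1)
    (μ : Measure ℚ_[2]) [μ.IsAddHaarMeasure]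
    (hμ : μ {x : ℚ_[2] | ‖x‖ ≤ 1} = 1)
    (φ : ℚ_[2] → ℂ) (hlc : IsLocallyConstant φ) (hcs : HasCompactSupport φ)
    (hx : ∀ y : ℚ_[2], ψ (2 * y ^ 2) * φ y = φ y)
    (hy : ∀ y : ℚ_[2],
      ψ (2 * y ^ 2) * (∫ u, ψ (2 * u * y) * φ u ∂μ) = ∫ u, ψ (2 * u * y) * φ u ∂μ) :
    ∃ a : ℂ, φ = fun y => a * Set.indicator {x : ℚ_[2] | ‖x‖ ≤ 1} (fun _ => (1 : ℂ)) y :=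
  invariant_vector_is_indicator_general ψ hhom htriv hnontriv μ φ hlc hcs hx hy
end

section
/- Let ψ be an additive character of ℚ₂ of conductor 1, let μ be the additive Haar measure on ℚ₂ with μ(ℤ₂) = 1, let n ≥ 1, and equip ℚ₂ⁿ with the product measure μⁿ. Let φ : ℚ₂ⁿ → ℂ be a locally constant function with compact support and define φ̂(y) = ∫_{ℚ₂ⁿ} ψ(2 uᵀy) φ(u) dμⁿ(u), where uᵀy = Σᵢ uᵢ yᵢ. If for every index i and every y ∈ ℚ₂ⁿ one has ψ(2 yᵢ²) φ(y) = φ(y), and for every index i and every y ∈ ℚ₂ⁿ one has ψ(2 yᵢ²) φ̂(y) = φ̂(y), then φ is a scalar multiple of the indicator function of ℤ₂ⁿ. -/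
/-!
Put `χ = ψ(2 ·)`. It is trivial on `ℤ₂`, and since the residue field of `ℤ₂` is `𝔽₂` it is
nontrivial at every `w` with `‖w‖ > 1`: some `2ᵐ w` is congruent to `1/2` modulo `ℤ₂`. Hence the
invariance under `ψ(2 yᵢ²)` forces both `φ` and `φ̂` to vanish outside `ℤ₂ⁿ`.

For `x ∈ ℤ₂ⁿ`, sum `χ(-x ⬝ y) φ̂(y)` over the grid `y ∈ 2⁻ᵏ {0, …, 2ᵏ - 1}ⁿ`. By orthogonality
of characters on `ℤ₂ / 2ᵏℤ₂` this is `2ᵏⁿ` times the integral of `φ` over `x + 2ᵏℤ₂ⁿ`, a ball of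
measure `2⁻ᵏⁿ`; on the other hand only `y = 0` lies in `ℤ₂ⁿ`, so the sum is `φ̂(0)`. Choosing `k`
so large that `φ` is constant on that ball gives `φ(x) = φ̂(0)`.
-/

open MeasureTheory Metric Function

theorem geom_sum_eq_ite_of_pow_eq_one {K : Type*} [Field K] [DecidableEq K] {ζ : K} {N : ℕ}
    (h : ζ ^ N = 1) :
    ∑ j ∈ Finset.range N, ζ ^ j = if ζ = 1 then (N : K) else 0 := by
  split_ifs with hζ
  · simp [hζ]
  · rw [geom_sum_eq hζ, h, sub_self, zero_div]

theorem AddChar.map_sum_eq_prod {A M : Type*} [AddCommMonoid A] [CommMonoid M]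
    (χ : AddChar A M) {ι : Type*} (s : Finset ι) (f : ι → A) :
    χ (∑ i ∈ s, f i) = ∏ i ∈ s, χ (f i) :=
  map_prod χ.toMonoidHom (fun i => Multiplicative.ofAdd (f i)) s

namespace TwoAdic

theorem norm_two : ‖(2 : ℚ_[2])‖ = 2⁻¹ := by
  simpa using Padic.norm_p (p := 2)

/-- The residue field of `ℤ₂` is `𝔽₂`. -/
theorem norm_le_half_or_norm_sub_le_half {x c : ℚ_[2]} (hx : ‖x‖ ≤ ‖c‖) :
    ‖x‖ ≤ ‖c‖ / 2 ∨ ‖x - c‖ ≤ ‖c‖ / 2 := by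
  rcases eq_or_ne c 0 with rfl | hc
  · simp_all
  have hy : ‖x / c‖ ≤ 1 := by rwa [norm_div, div_le_one (norm_pos_iff.mpr hc)]
  let y : ℤ_[2] := ⟨x / c, hy⟩
  obtain ⟨j, hj, hmem⟩ := PadicInt.exists_mem_range y
  rw [IsLocalRing.mem_maximalIdeal, PadicInt.mem_nonunits, PadicInt.norm_def,
    PadicInt.coe_sub, PadicInt.coe_natCast] at hmem
  replace hmem : ‖x / c - j‖ ≤ 2⁻¹ := by
    have := (Padic.norm_lt_pow_iff_norm_le_pow_sub_one (x / c - (j : ℚ_[2])) 0).mp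
      (by simpa [y] using hmem)
    rwa [zero_sub, zpow_neg_one, Nat.cast_ofNat] at this
  have hscale : ‖x - j * c‖ ≤ ‖c‖ / 2 := by
    rw [show x - j * c = c * (x / c - j) by field_simp, norm_mul, div_eq_mul_inv]
    exact mul_le_mul_of_nonneg_left hmem (norm_nonneg c)
  interval_cases j
  · left; simpa using hscale
  · right; simpa using hscale

theorem norm_le_one_or_norm_sub_inv_two_le_one {x : ℚ_[2]} (hx : ‖x‖ ≤ 2) :
    ‖x‖ ≤ 1 ∨ ‖x - 2⁻¹‖ ≤ 1 := by
  have h2 : ‖(2⁻¹ : ℚ_[2])‖ = 2 := by rw [norm_inv, norm_two, inv_inv]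
  simpa [h2] using norm_le_half_or_norm_sub_le_half (c := 2⁻¹) (h2 ▸ hx)

theorem exists_norm_two_pow_mul_eq_two {w : ℚ_[2]} (hw : 1 < ‖w‖) :
    ∃ m : ℕ, ‖2 ^ m * w‖ = 2 := by
  have hw0 : w ≠ 0 := by rintro rfl; norm_num at hw
  have hnorm := Padic.norm_eq_zpow_neg_valuation hw0
  simp only [Nat.cast_ofNat] at hnorm
  have hv : 0 < -w.valuation := by
    rw [hnorm, ← zpow_zero (2 : ℝ)] at hw
    exact (zpow_lt_zpow_iff_right₀ one_lt_two).mp hw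
  lift -w.valuation - 1 to ℕ using by omega with m hm
  refine ⟨m, ?_⟩
  rw [norm_mul, norm_pow, norm_two, hnorm, inv_pow, ← zpow_natCast, ← zpow_neg,
    ← zpow_add₀ two_ne_zero, hm]
  norm_num

theorem one_lt_norm_natCast_div_two_pow {j k : ℕ} (hj0 : j ≠ 0) (hj : j < 2 ^ k) :
    1 < ‖(j : ℚ_[2]) / 2 ^ k‖ := by
  have hlt : (2 : ℝ) ^ (-k : ℤ) < ‖(j : ℚ_[2])‖ := by
    by_contra! hle
    have hdvd := (Padic.norm_int_le_pow_iff_dvd (p := 2) j k).mp (by exact_mod_cast hle)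
    have : 2 ^ k ≤ j := by exact_mod_cast Int.le_of_dvd (by omega) hdvd
    omega
  rw [norm_div, norm_pow, norm_two, lt_div_iff₀ (by positivity), one_mul, inv_pow]
  simpa using hlt

theorem closedBall_zero_eq_union (k : ℕ) :
    closedBall (0 : ℚ_[2]) (2⁻¹ ^ k) =
      closedBall 0 (2⁻¹ ^ (k + 1)) ∪ closedBall (2 ^ k) (2⁻¹ ^ (k + 1)) := by
  have h2k : ‖(2 : ℚ_[2]) ^ k‖ = 2⁻¹ ^ k := by rw [norm_pow, norm_two]
  have hle : (2⁻¹ : ℝ) ^ (k + 1) ≤ 2⁻¹ ^ k :=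
    pow_le_pow_of_le_one (by norm_num) (by norm_num) k.le_succ
  ext x
  simp only [Set.mem_union, mem_closedBall, dist_eq_norm, sub_zero]
  constructor
  · intro hx
    simpa [h2k, pow_succ, div_eq_mul_inv] using
      norm_le_half_or_norm_sub_le_half (c := 2 ^ k) (h2k ▸ hx)
  · rintro (hx | hx)
    · exact hx.trans hle
    · calc ‖x‖ = ‖(x - 2 ^ k) + 2 ^ k‖ := by rw [sub_add_cancel]
        _ ≤ max ‖x - 2 ^ k‖ ‖(2 : ℚ_[2]) ^ k‖ := IsUltrametricDist.norm_add_le_max _ _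
        _ ≤ 2⁻¹ ^ k := max_le (hx.trans hle) h2k.le

theorem disjoint_closedBall_zero_closedBall_two_pow (k : ℕ) :
    Disjoint (closedBall (0 : ℚ_[2]) (2⁻¹ ^ (k + 1)))
      (closedBall (2 ^ k) (2⁻¹ ^ (k + 1))) := by
  refine Set.disjoint_left.mpr fun x hx hx' => ?_
  rw [mem_closedBall_zero_iff] at hx
  rw [mem_closedBall, dist_eq_norm] at hx'
  have : ‖(2 : ℚ_[2]) ^ k‖ ≤ 2⁻¹ ^ (k + 1) := by
    calc ‖(2 : ℚ_[2]) ^ k‖ = ‖x + -(x - 2 ^ k)‖ := by rw [neg_sub, add_sub_cancel]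
      _ ≤ max ‖x‖ ‖-(x - 2 ^ k)‖ := IsUltrametricDist.norm_add_le_max _ _
      _ ≤ 2⁻¹ ^ (k + 1) := max_le hx (by rwa [norm_neg])
  rw [norm_pow, norm_two, pow_succ] at this
  nlinarith [pow_pos (by norm_num : (0 : ℝ) < 2⁻¹) k]

section Character

variable {χ : AddChar ℚ_[2] ℂ} (hχ : ∀ x : ℚ_[2], ‖x‖ ≤ 1 → χ x = 1)
include hχ

theorem apply_eq_of_norm_sub_le_one {x y : ℚ_[2]} (h : ‖x - y‖ ≤ 1) : χ x = χ y := by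
  rw [← sub_add_cancel x y, AddChar.map_add_eq_mul, hχ _ h, one_mul]

variable (hχ' : ∃ x : ℚ_[2], ‖x‖ ≤ 2 ∧ χ x ≠ 1)
include hχ'

theorem apply_inv_two_ne_one : χ 2⁻¹ ≠ 1 := by
  obtain ⟨x, hx, hχx⟩ := hχ'
  rcases norm_le_one_or_norm_sub_inv_two_le_one hx with h | h
  · exact absurd (hχ x h) hχx
  · rwa [← apply_eq_of_norm_sub_le_one hχ h]

theorem apply_ne_one_of_one_lt_norm {w : ℚ_[2]} (hw : 1 < ‖w‖) : χ w ≠ 1 := by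
  obtain ⟨m, hm⟩ := exists_norm_two_pow_mul_eq_two hw
  rcases norm_le_one_or_norm_sub_inv_two_le_one hm.le with h | h
  · linarith
  · intro hχw
    apply apply_inv_two_ne_one hχ hχ'
    have hsmul : (2 : ℚ_[2]) ^ m * w = (2 ^ m : ℕ) • w := by simp [nsmul_eq_mul]
    rw [← apply_eq_of_norm_sub_le_one hχ h, hsmul, AddChar.map_nsmul_eq_pow, hχw, one_pow]

theorem apply_eq_one_iff {w : ℚ_[2]} : χ w = 1 ↔ ‖w‖ ≤ 1 :=
  ⟨fun h => not_lt.mp fun hw => apply_ne_one_of_one_lt_norm hχ hχ' hw h, hχ w⟩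

theorem sum_range_apply_mul_div_two_pow {a : ℚ_[2]} (ha : ‖a‖ ≤ 1) (k : ℕ) :
    ∑ j ∈ Finset.range (2 ^ k), χ (a * (j / 2 ^ k)) =
      if ‖a‖ ≤ 2⁻¹ ^ k then (2 ^ k : ℂ) else 0 := by
  have hpow (j : ℕ) : χ (a * (j / 2 ^ k)) = χ (a / 2 ^ k) ^ j := by
    rw [← AddChar.map_nsmul_eq_pow, nsmul_eq_mul]; ring_nf
  have hroot : χ (a / 2 ^ k) ^ 2 ^ k = 1 := by
    rw [← AddChar.map_nsmul_eq_pow, nsmul_eq_mul, Nat.cast_pow, Nat.cast_ofNat,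
      mul_div_cancel₀ _ (by simp), hχ a ha]
  have hnorm : ‖a / 2 ^ k‖ ≤ 1 ↔ ‖a‖ ≤ 2⁻¹ ^ k := by
    rw [norm_div, norm_pow, norm_two, div_le_one (by positivity)]
  simp_rw [hpow, geom_sum_eq_ite_of_pow_eq_one hroot, apply_eq_one_iff hχ hχ', hnorm]
  push_cast
  rfl

end Character

section Grid

variable {ι : Type*}

noncomputable def gridPoint (k : ℕ) (m : ι → ℕ) : ι → ℚ_[2] :=
  fun i => (m i : ℚ_[2]) / 2 ^ k

theorem gridPoint_zero (k : ℕ) : gridPoint k (0 : ι → ℕ) = 0 := by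
  funext i
  simp [gridPoint]

variable [Fintype ι]

theorem one_lt_norm_gridPoint [DecidableEq ι] {k : ℕ} {m : ι → ℕ}
    (hm : m ∈ Fintype.piFinset fun _ => Finset.range (2 ^ k)) (hm0 : m ≠ 0) :
    1 < ‖gridPoint k m‖ := by
  obtain ⟨i, hi⟩ := Function.ne_iff.mp hm0
  exact (one_lt_norm_natCast_div_two_pow hi (Finset.mem_range.mp (Fintype.mem_piFinset.mp hm i))
    ).trans_le (norm_le_pi_norm (gridPoint k m) i)

variable {χ : AddChar ℚ_[2] ℂ} (hχ : ∀ x : ℚ_[2], ‖x‖ ≤ 1 → χ x = 1)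
  (hχ' : ∃ x : ℚ_[2], ‖x‖ ≤ 2 ∧ χ x ≠ 1)
include hχ hχ'

theorem sum_gridPoint_apply_dotProduct [DecidableEq ι] {d : ι → ℚ_[2]} (hd : ‖d‖ ≤ 1)
    (k : ℕ) :
    ∑ m ∈ Fintype.piFinset (fun _ : ι => Finset.range (2 ^ k)), χ (d ⬝ᵥ gridPoint k m) =
      if ‖d‖ ≤ 2⁻¹ ^ k then (2 ^ k : ℂ) ^ Fintype.card ι else 0 := by
  have hdi (i : ι) : ‖d i‖ ≤ 1 := (norm_le_pi_norm d i).trans hd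
  simp_rw [dotProduct, gridPoint, AddChar.map_sum_eq_prod]
  rw [← Finset.prod_univ_sum (fun _ => Finset.range (2 ^ k)) fun i j => χ (d i * (j / 2 ^ k))]
  simp_rw [sum_range_apply_mul_div_two_pow hχ hχ' (hdi _)]
  rw [Finset.prod_ite_zero, Finset.prod_const, Finset.card_univ]
  simp only [Finset.mem_univ, true_imp_iff,
    ← pi_norm_le_iff_of_nonneg (by positivity : (0 : ℝ) ≤ 2⁻¹ ^ k)]

theorem support_subset_closedBall_of_apply_sq_mul_eq {g : (ι → ℚ_[2]) → ℂ}
    (hg : ∀ (i : ι) (y : ι → ℚ_[2]), χ (y i ^ 2) * g y = g y) :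
    support g ⊆ closedBall 0 1 := by
  intro y hy
  rw [mem_closedBall_zero_iff, pi_norm_le_iff_of_nonneg zero_le_one]
  intro i
  by_contra! hyi
  refine apply_ne_one_of_one_lt_norm hχ hχ' (w := y i ^ 2) ?_ (mul_right_cancel₀ hy ?_)
  · rw [norm_pow]; exact one_lt_pow₀ hyi two_ne_zero
  · rw [hg, one_mul]

end Grid

theorem exists_eqOn_closedBall_two_inv_pow {ι : Type*} [Fintype ι] {φ : (ι → ℚ_[2]) → ℂ}
    (hlc : IsLocallyConstant φ) (x : ι → ℚ_[2]) :
    ∃ k : ℕ, Set.EqOn φ (fun _ => φ x) (closedBall x (2⁻¹ ^ k)) := by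
  obtain ⟨ε, hε, hball⟩ := Metric.isOpen_iff.mp (hlc.isOpen_fiber (φ x)) x rfl
  obtain ⟨k, hk⟩ := exists_pow_lt_of_lt_one hε (by norm_num : (2 : ℝ)⁻¹ < 1)
  exact ⟨k, fun u hu => hball (closedBall_subset_ball hk hu)⟩

section Measure

variable [MeasurableSpace ℚ_[2]] [BorelSpace ℚ_[2]] (μ : Measure ℚ_[2]) [μ.IsAddHaarMeasure]

theorem measure_closedBall (hμ : μ (closedBall 0 1) = 1) (x : ℚ_[2]) (k : ℕ) :
    μ (closedBall x (2⁻¹ ^ k)) = 2⁻¹ ^ k := by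
  rw [Measure.addHaar_closedBall_center]
  induction k with
  | zero => simpa using hμ
  | succ k ih =>
    rw [closedBall_zero_eq_union, measure_union (disjoint_closedBall_zero_closedBall_two_pow k)
      measurableSet_closedBall, Measure.addHaar_closedBall_center μ (2 ^ k), ← two_mul] at ih
    rw [pow_succ (2⁻¹ : ENNReal), ← ih, mul_comm,
      ENNReal.inv_mul_cancel_left two_ne_zero ENNReal.ofNat_ne_top]

theorem measure_pi_closedBall (hμ : μ (closedBall 0 1) = 1) {ι : Type*} [Fintype ι]
    (x : ι → ℚ_[2]) (k : ℕ) :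
    Measure.pi (fun _ : ι => μ) (closedBall x (2⁻¹ ^ k)) = (2⁻¹ ^ k) ^ Fintype.card ι := by
  rw [closedBall_pi _ (by positivity), Measure.pi_pi]
  simp only [measure_closedBall μ hμ, Finset.prod_const, Finset.card_univ]

end Measure

section Fourier

variable {ι : Type*} [Fintype ι] [MeasurableSpace ℚ_[2]]

noncomputable def fourierTransform (χ : AddChar ℚ_[2] ℂ) (μ : Measure ℚ_[2])
    (φ : (ι → ℚ_[2]) → ℂ) (y : ι → ℚ_[2]) : ℂ :=
  ∫ u, χ (u ⬝ᵥ y) * φ u ∂Measure.pi fun _ => μ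

variable [BorelSpace ℚ_[2]] (μ : Measure ℚ_[2]) [μ.IsAddHaarMeasure]
  {χ : AddChar ℚ_[2] ℂ} {φ : (ι → ℚ_[2]) → ℂ}

theorem integrable_apply_dotProduct_mul (hχc : Continuous χ) (hφc : Continuous φ)
    (hcs : HasCompactSupport φ) (y : ι → ℚ_[2]) :
    Integrable (fun u => χ (u ⬝ᵥ y) * φ u) (Measure.pi fun _ => μ) :=
  ((hχc.comp (continuous_id.dotProduct continuous_const)).mul
    hφc).integrable_of_hasCompactSupport hcs.mul_left

theorem sum_gridPoint_mul_fourierTransform [DecidableEq ι] (hχc : Continuous χ)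
    (hχ : ∀ x : ℚ_[2], ‖x‖ ≤ 1 → χ x = 1) (hχ' : ∃ x : ℚ_[2], ‖x‖ ≤ 2 ∧ χ x ≠ 1)
    (hφc : Continuous φ) (hcs : HasCompactSupport φ) (hφ : support φ ⊆ closedBall 0 1)
    {x : ι → ℚ_[2]} (hx : ‖x‖ ≤ 1) (k : ℕ) :
    ∑ m ∈ Fintype.piFinset (fun _ : ι => Finset.range (2 ^ k)),
        χ (-(x ⬝ᵥ gridPoint k m)) * fourierTransform χ μ φ (gridPoint k m) =
      (2 ^ k : ℂ) ^ Fintype.card ι *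
        ∫ u in closedBall x (2⁻¹ ^ k), φ u ∂Measure.pi fun _ => μ := by
  simp_rw [fourierTransform, ← integral_const_mul]
  rw [← integral_finsetSum _ fun m _ =>
      (integrable_apply_dotProduct_mul μ hχc hφc hcs _).const_mul _,
    ← integral_indicator measurableSet_closedBall]
  congr 1
  funext u
  by_cases hu : φ u = 0
  · rw [eq_comm, Set.indicator_apply_eq_zero.mpr fun _ => by rw [hu, mul_zero]]
    simp [hu]
  have hux : ‖u - x‖ ≤ 1 := by
    rw [sub_eq_add_neg]
    exact (IsUltrametricDist.norm_add_le_max _ _).trans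
      (max_le (mem_closedBall_zero_iff.mp (hφ hu)) (by rwa [norm_neg]))
  calc ∑ m ∈ Fintype.piFinset (fun _ : ι => Finset.range (2 ^ k)),
          χ (-(x ⬝ᵥ gridPoint k m)) * (χ (u ⬝ᵥ gridPoint k m) * φ u)
      = (∑ m ∈ Fintype.piFinset (fun _ : ι => Finset.range (2 ^ k)),
          χ ((u - x) ⬝ᵥ gridPoint k m)) * φ u := by
        rw [Finset.sum_mul]
        refine Finset.sum_congr rfl fun m _ => ?_
        rw [sub_dotProduct, sub_eq_neg_add, AddChar.map_add_eq_mul, mul_assoc]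
    _ = (closedBall x (2⁻¹ ^ k)).indicator
          (fun v => (2 ^ k : ℂ) ^ Fintype.card ι * φ v) u := by
        rw [sum_gridPoint_apply_dotProduct hχ hχ' hux]
        by_cases hB : ‖u - x‖ ≤ 2⁻¹ ^ k
        · rw [if_pos hB, Set.indicator_of_mem (mem_closedBall_iff_norm.mpr hB)]
        · rw [if_neg hB, Set.indicator_of_notMem (mt mem_closedBall_iff_norm.mp hB), zero_mul]

theorem apply_eq_fourierTransform_zero (hχc : Continuous χ)
    (hχ : ∀ x : ℚ_[2], ‖x‖ ≤ 1 → χ x = 1) (hχ' : ∃ x : ℚ_[2], ‖x‖ ≤ 2 ∧ χ x ≠ 1)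
    (hμ : μ (closedBall 0 1) = 1) (hlc : IsLocallyConstant φ) (hcs : HasCompactSupport φ)
    (hφ : support φ ⊆ closedBall 0 1)
    (hφhat : support (fourierTransform χ μ φ) ⊆ closedBall 0 1)
    {x : ι → ℚ_[2]} (hx : ‖x‖ ≤ 1) :
    φ x = fourierTransform χ μ φ 0 := by
  classical
  obtain ⟨k, hk⟩ := exists_eqOn_closedBall_two_inv_pow hlc x
  have hgrid0 : (0 : ι → ℕ) ∈ Fintype.piFinset fun _ : ι => Finset.range (2 ^ k) :=
    Fintype.mem_piFinset.mpr fun _ => Finset.mem_range.mpr (Nat.two_pow_pos k)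
  symm
  calc fourierTransform χ μ φ 0
      = ∑ m ∈ Fintype.piFinset (fun _ : ι => Finset.range (2 ^ k)),
          χ (-(x ⬝ᵥ gridPoint k m)) * fourierTransform χ μ φ (gridPoint k m) := by
        rw [Finset.sum_eq_single_of_mem 0 hgrid0 fun m hm hm0 => by
          rw [notMem_support.mp fun h => (one_lt_norm_gridPoint hm hm0).not_ge
            (mem_closedBall_zero_iff.mp (hφhat h)), mul_zero]]
        rw [gridPoint_zero, dotProduct_zero, neg_zero, AddChar.map_zero_eq_one, one_mul]
    _ = (2 ^ k : ℂ) ^ Fintype.card ι *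
          ∫ u in closedBall x (2⁻¹ ^ k), φ u ∂Measure.pi fun _ => μ :=
        sum_gridPoint_mul_fourierTransform μ hχc hχ hχ' hlc.continuous hcs hφ hx k
    _ = (2 ^ k : ℂ) ^ Fintype.card ι *
          ((Measure.pi fun _ => μ).real (closedBall x (2⁻¹ ^ k)) • φ x) := by
        rw [setIntegral_congr_fun measurableSet_closedBall hk, setIntegral_const]
    _ = φ x := by
        rw [measureReal_def, measure_pi_closedBall μ hμ, Complex.real_smul, ← mul_assoc]
        simp

end Fourier

end TwoAdic

theorem invariant_vector_is_indicator_pi_general (ψ : ℚ_[2] → ℂ)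
    [MeasurableSpace ℚ_[2]] [BorelSpace ℚ_[2]]
    (hcont : Continuous ψ)
    (hhom : ∀ x y : ℚ_[2], ψ (x + y) = ψ x * ψ y)
    (htriv : ∀ x : ℚ_[2], ‖x‖ ≤ (2 : ℝ)⁻¹ → ψ x = 1)
    (hnontriv : ∃ x : ℚ_[2], ‖x‖ ≤ 1 ∧ ψ x ≠ 1)
    (μ : Measure ℚ_[2]) [μ.IsAddHaarMeasure]
    (hμ : μ {x : ℚ_[2] | ‖x‖ ≤ 1} = 1)
    (n : ℕ)
    (φ : (Fin n → ℚ_[2]) → ℂ) (hlc : IsLocallyConstant φ) (hcs : HasCompactSupport φ)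
    (φhat : (Fin n → ℚ_[2]) → ℂ)
    (hφhat : ∀ y : Fin n → ℚ_[2],
      φhat y = ∫ u, ψ (2 * ∑ i, u i * y i) * φ u ∂(Measure.pi fun _ : Fin n => μ))
    (hx : ∀ (i : Fin n) (y : Fin n → ℚ_[2]), ψ (2 * y i ^ 2) * φ y = φ y)
    (hy : ∀ (i : Fin n) (y : Fin n → ℚ_[2]), ψ (2 * y i ^ 2) * φhat y = φhat y) :
    ∃ a : ℂ, φ = fun y =>
      a * Set.indicator {x : Fin n → ℚ_[2] | ∀ i, ‖x i‖ ≤ 1} (fun _ => (1 : ℂ)) y := by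
  let χ : AddChar ℚ_[2] ℂ :=
    { toFun := fun x => ψ (2 * x)
      map_zero_eq_one' := by simpa using htriv 0 (by norm_num)
      map_add_eq_mul' := fun x y => by rw [mul_add, hhom] }
  have hχ (x : ℚ_[2]) (hx : ‖x‖ ≤ 1) : χ x = 1 :=
    htriv _ (by rw [norm_mul, TwoAdic.norm_two]; linarith)
  have hχ' : ∃ x : ℚ_[2], ‖x‖ ≤ 2 ∧ χ x ≠ 1 := by
    obtain ⟨x, hx, hψx⟩ := hnontriv
    refine ⟨x / 2, ?_, by simpa [χ, mul_div_cancel₀] using hψx⟩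
    rw [norm_div, TwoAdic.norm_two, div_inv_eq_mul]; linarith
  have hφhat' : φhat = TwoAdic.fourierTransform χ μ φ := funext hφhat
  have hμ' : μ (closedBall 0 1) = 1 := by simpa [closedBall, dist_eq_norm] using hμ
  have hsupp := TwoAdic.support_subset_closedBall_of_apply_sq_mul_eq hχ hχ' hx
  have hsupp_hat := TwoAdic.support_subset_closedBall_of_apply_sq_mul_eq hχ hχ' hy
  have hB : {x : Fin n → ℚ_[2] | ∀ i, ‖x i‖ ≤ 1} = closedBall 0 1 := by
    ext; simp [pi_norm_le_iff_of_nonneg]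
  refine ⟨φhat 0, funext fun y => ?_⟩
  rw [hB]
  by_cases hy1 : y ∈ closedBall 0 1
  · rw [Set.indicator_of_mem hy1, mul_one, hφhat']
    exact TwoAdic.apply_eq_fourierTransform_zero μ (hcont.comp (continuous_const_mul 2)) hχ hχ'
      hμ' hlc hcs hsupp (hφhat' ▸ hsupp_hat) (mem_closedBall_zero_iff.mp hy1)
  · rw [Set.indicator_of_notMem hy1, mul_zero]
    exact notMem_support.mp (mt (hsupp ·) hy1)

/-- Let `ψ` be an additive character of `ℚ₂` of conductor `1`, `μ` the additive Haar
measure on `ℚ₂` with `μ(ℤ₂) = 1`, `n ≥ 1`, and equip `ℚ₂ⁿ` with the product measure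
`μⁿ`.  Let `φ : ℚ₂ⁿ → ℂ` be locally constant with compact support, with Fourier
transform `φ̂ y = ∫ ψ(2 uᵀy) φ u dμⁿ(u)` where `uᵀy = Σᵢ uᵢ yᵢ`.  If for every
index `i` and every `y` one has `ψ(2 yᵢ²) φ y = φ y` and `ψ(2 yᵢ²) φ̂ y = φ̂ y`,
then `φ` is a scalar multiple of the indicator function of `ℤ₂ⁿ`. -/
theorem invariant_vector_is_indicator_pi (ψ : ℚ_[2] → ℂ)
    [MeasurableSpace ℚ_[2]] [BorelSpace ℚ_[2]]
    (hcont : Continuous ψ)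
    (hhom : ∀ x y : ℚ_[2], ψ (x + y) = ψ x * ψ y)
    (hcircle : ∀ x : ℚ_[2], ‖ψ x‖ = 1)
    (htriv : ∀ x : ℚ_[2], ‖x‖ ≤ (2 : ℝ)⁻¹ → ψ x = 1)
    (hnontriv : ∃ x : ℚ_[2], ‖x‖ ≤ 1 ∧ ψ x ≠ 1)
    (μ : Measure ℚ_[2]) [μ.IsAddHaarMeasure]
    (hμ : μ {x : ℚ_[2] | ‖x‖ ≤ 1} = 1)
    (n : ℕ) (hn : 1 ≤ n)
    (φ : (Fin n → ℚ_[2]) → ℂ) (hlc : IsLocallyConstant φ) (hcs : HasCompactSupport φ)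
    (φhat : (Fin n → ℚ_[2]) → ℂ)
    (hφhat : ∀ y : Fin n → ℚ_[2],
      φhat y = ∫ u, ψ (2 * ∑ i, u i * y i) * φ u ∂(Measure.pi fun _ : Fin n => μ))
    (hx : ∀ (i : Fin n) (y : Fin n → ℚ_[2]), ψ (2 * y i ^ 2) * φ y = φ y)
    (hy : ∀ (i : Fin n) (y : Fin n → ℚ_[2]), ψ (2 * y i ^ 2) * φhat y = φhat y) :
    ∃ a : ℂ, φ = fun y =>
      a * Set.indicator {x : Fin n → ℚ_[2] | ∀ i, ‖x i‖ ≤ 1} (fun _ => (1 : ℂ)) y :=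
  invariant_vector_is_indicator_pi_general ψ hcont hhom htriv hnontriv μ hμ n φ hlc hcs φhat hφhat
    hx hy
end

section
/- Let G be a profinite group, H an open subgroup of G, μ the Haar measure on G normalized so that μ(H) = 1, and χ : H → ℂˣ a continuous group homomorphism. Let U = { φ : G → ℂ : φ(hx) = χ(h)φ(x) for all h ∈ H, x ∈ G }, a complex vector space of dimension [G : H] on which G acts by right translation (g·φ)(x) = φ(xg). Let 𝓗 = { f : G → ℂ : f locally constant, f(h₁ x h₂) = χ(h₁) f(x) χ(h₂) for all h₁, h₂ ∈ H, x ∈ G }, an associative ℂ-algebra under convolution (f ⋆ f')(y) = ∫_G f(x) f'(x⁻¹ y) dμ(x), with identity element χ̇ (the extension of χ by 0 to G). Then the map Θ sending f ∈ 𝓗 to the linear endomorphism φ ↦ f ⋆ φ of U is an isomorphism of ℂ-algebras from 𝓗 onto the algebra End_G(U) of G-equivariant linear endomorphisms of U. Moreover, every f ∈ 𝓗 that vanishes identically on H acts on U as a trace-zero linear endomorphism. -/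
open MeasureTheory

/-- Convolution of functions on `G` with respect to the measure `μ`:
`(f ⋆ f')(y) = ∫_G f(x) f'(x⁻¹ y) dμ(x)`. -/
noncomputable def heckeConv {G : Type*} [Group G] [MeasurableSpace G]
    (μ : Measure G) (f f' : G → ℂ) : G → ℂ :=
  fun y => ∫ x, f x * f' (x⁻¹ * y) ∂μ

/-- The χ-spherical Hecke algebra (as a set of functions):
locally constant `f : G → ℂ` with `f(h₁ x h₂) = χ(h₁) f(x) χ(h₂)` for `h₁, h₂ ∈ H`. -/
def heckeSet {G : Type*} [Group G] [TopologicalSpace G]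
    (H : Subgroup G) (χ : H →* ℂˣ) : Set (G → ℂ) :=
  {f | IsLocallyConstant f ∧
    ∀ (h₁ h₂ : H) (x : G), f (↑h₁ * x * ↑h₂) = (χ h₁ : ℂ) * f x * (χ h₂ : ℂ)}

/-- The space `U = { φ : G → ℂ | φ(hx) = χ(h) φ(x) for h ∈ H }` of the induced
representation, as a `ℂ`-subspace of `G → ℂ`; `G` acts on it by right translation. -/
noncomputable def inducedSubspace {G : Type*} [Group G]
    (H : Subgroup G) (χ : H →* ℂˣ) : Submodule ℂ (G → ℂ) where
  carrier := {φ | ∀ (h : H) (x : G), φ (↑h * x) = (χ h : ℂ) * φ x}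
  add_mem' := by
    intro a b ha hb h x
    simp only [Set.mem_setOf_eq] at *
    simp [ha h x, hb h x]; ring
  zero_mem' := by intro h x; simp
  smul_mem' := by
    intro c a ha h x
    simp only [Set.mem_setOf_eq] at *
    simp [ha h x]; ring

open scoped Classical in
/-- The extension `χ̇` of `χ` by `0` to all of `G`. -/
noncomputable def chiDot {G : Type*} [Group G]
    (H : Subgroup G) (χ : H →* ℂˣ) : G → ℂ :=
  fun x => if hx : x ∈ H then (χ ⟨x, hx⟩ : ℂ) else 0

/-!
For χ-equivariant data the convolution integrand `x ↦ f x * φ (x⁻¹ * y)` is right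
`H`-invariant, so, with `μ H = 1`, the integral is the finite sum
`∑ q : G ⧸ H, f q.out * φ (q.out⁻¹ * y)` over coset representatives (`cosetConv`), and all
algebraic claims become identities between finite sums. `χ̇` is a two-sided unit, so
`f = f ⋆ χ̇` gives injectivity. `U` has the basis `δ_q = χ̇ (· * q.out)`, with coordinates
`φ ↦ φ q.out⁻¹`; an equivariant `T` is convolution with `f = T χ̇` because
`T δ_q = f (· * q.out)`. The diagonal entries of `φ ↦ f ⋆ φ` in this basis are
`∑ p, f p.out * χ̇ p.out⁻¹`, which vanish when `f` vanishes on `H`.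

Local constancy of `χ̇` is where profiniteness enters: `ℂˣ` has no small subgroups, so an open
subgroup of `H` mapped by `χ` into the disc `‖z - 1‖ < 1/2` lies in `ker χ`.
-/

theorem IsLocallyConstant.finset_sum {X ι M : Type*} [TopologicalSpace X] [AddCommMonoid M]
    (s : Finset ι) {F : ι → X → M} (hF : ∀ i ∈ s, IsLocallyConstant (F i)) :
    IsLocallyConstant fun x => ∑ i ∈ s, F i x := by
  simpa only [← Finset.sum_apply] using
    Finset.sum_induction F IsLocallyConstant (fun _ _ hf hg => hf.add hg) .zero hF

section CosetSums

variable {G : Type*} [Group G] {H : Subgroup G}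

theorem apply_out_mk_of_invariant {α : Type*} {F : G → α}
    (hF : ∀ x, ∀ h ∈ H, F (x * h) = F x) (x : G) :
    F (QuotientGroup.mk x : G ⧸ H).out = F x := by
  obtain ⟨h, hh⟩ := QuotientGroup.mk_out_eq_mul H x
  rw [hh, hF x h h.2]

theorem preimage_mk_singleton_eq (q : G ⧸ H) :
    QuotientGroup.mk ⁻¹' {q} = (q.out⁻¹ * ·) ⁻¹' (H : Set G) := by
  ext x
  rw [Set.mem_preimage, Set.mem_singleton_iff, eq_comm, ← QuotientGroup.out_eq' q,
    QuotientGroup.eq, QuotientGroup.out_eq']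
  rfl

variable [Fintype (G ⧸ H)] {M : Type*} [AddCommMonoid M] {F : G → M}

theorem sum_out_mul_left_of_invariant (hF : ∀ x, ∀ h ∈ H, F (x * h) = F x) (g : G) :
    ∑ q : G ⧸ H, F (g * q.out) = ∑ q : G ⧸ H, F q.out := by
  refine Fintype.sum_bijective (g • ·) (MulAction.bijective g) _ _ fun q => ?_
  have hq : g • q = QuotientGroup.mk (g * q.out) := by
    rw [← smul_eq_mul, ← MulAction.Quotient.smul_mk, QuotientGroup.out_eq']
  rw [hq, apply_out_mk_of_invariant hF]

theorem sum_out_eq_apply_one_of_invariant (hF : ∀ x, ∀ h ∈ H, F (x * h) = F x)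
    (hF₀ : ∀ x ∉ H, F x = 0) : ∑ q : G ⧸ H, F q.out = F 1 := by
  refine (Fintype.sum_eq_single (QuotientGroup.mk 1) fun q hq => hF₀ _ fun hmem => hq ?_).trans
    (apply_out_mk_of_invariant hF 1)
  rw [← QuotientGroup.out_eq' q, QuotientGroup.eq]
  simpa using hmem

end CosetSums

section Convolution

variable {G : Type*} [Group G] {H : Subgroup G} {χ : H →* ℂˣ}

theorem chiDot_of_mem {x : G} (hx : x ∈ H) : chiDot H χ x = χ ⟨x, hx⟩ := dif_pos hx

theorem chiDot_of_notMem {x : G} (hx : x ∉ H) : chiDot H χ x = 0 := dif_neg hx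

theorem chiDot_one : chiDot H χ 1 = 1 := by
  rw [chiDot_of_mem H.one_mem]
  exact congrArg Units.val (map_one χ)

theorem chiDot_mul_left (h : H) (x : G) : chiDot H χ (h * x) = χ h * chiDot H χ x := by
  by_cases hx : x ∈ H
  · rw [chiDot_of_mem hx, chiDot_of_mem (H.mul_mem h.2 hx), ← Units.val_mul, ← map_mul]
    rfl
  · rw [chiDot_of_notMem hx, chiDot_of_notMem ((H.mul_mem_cancel_left h.2).not.2 hx), mul_zero]

theorem chiDot_mul_right (x : G) (h : H) : chiDot H χ (x * h) = chiDot H χ x * χ h := by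
  by_cases hx : x ∈ H
  · rw [chiDot_of_mem hx, chiDot_of_mem (H.mul_mem hx h.2), ← Units.val_mul, ← map_mul]
    rfl
  · rw [chiDot_of_notMem hx, chiDot_of_notMem ((H.mul_mem_cancel_right h.2).not.2 hx), zero_mul]

theorem chiDot_mem_inducedSubspace : chiDot H χ ∈ inducedSubspace H χ :=
  chiDot_mul_left

theorem mem_inducedSubspace_of_mem_heckeSet [TopologicalSpace G] {f : G → ℂ}
    (hf : f ∈ heckeSet H χ) : f ∈ inducedSubspace H χ := fun h x => by
  simpa using hf.2 h 1 x

theorem apply_mul_of_mem_heckeSet [TopologicalSpace G] {f : G → ℂ} (hf : f ∈ heckeSet H χ)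
    (x : G) (h : H) : f (x * h) = f x * χ h := by
  simpa using hf.2 1 h x

theorem conv_integrand_invariant {f φ : G → ℂ} (hf : ∀ x (h : H), f (x * h) = f x * χ h)
    (hφ : φ ∈ inducedSubspace H χ) (y : G) :
    ∀ x, ∀ h ∈ H, f (x * h) * φ ((x * h)⁻¹ * y) = f x * φ (x⁻¹ * y) := by
  intro x h hh
  have hχ : (χ ⟨h, hh⟩ : ℂ) * χ ⟨h, hh⟩⁻¹ = 1 := by
    rw [← Units.val_mul, ← map_mul, mul_inv_cancel, map_one, Units.val_one]
  have hinv : (x * h)⁻¹ * y = ((⟨h, hh⟩⁻¹ : H) : G) * (x⁻¹ * y) := by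
    simp [mul_assoc]
  rw [hf x ⟨h, hh⟩, hinv, hφ]
  linear_combination (f x * φ (x⁻¹ * y)) * hχ

variable [Fintype (G ⧸ H)]

variable (H) in
/-- Independent of the chosen representatives `q.out` only for right `H`-invariant integrands. -/
noncomputable def cosetConv (f φ : G → ℂ) (y : G) : ℂ :=
  ∑ q : G ⧸ H, f q.out * φ (q.out⁻¹ * y)

theorem cosetConv_eq_sum_mul_out {f φ : G → ℂ} (hf : ∀ x (h : H), f (x * h) = f x * χ h)
    (hφ : φ ∈ inducedSubspace H χ) (g y : G) :
    cosetConv H f φ y = ∑ q : G ⧸ H, f (g * q.out) * φ ((g * q.out)⁻¹ * y) :=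
  (sum_out_mul_left_of_invariant (F := fun x => f x * φ (x⁻¹ * y))
    (conv_integrand_invariant hf hφ y) g).symm

theorem cosetConv_mul_left {f φ : G → ℂ} (hfL : f ∈ inducedSubspace H χ)
    (hf : ∀ x (h : H), f (x * h) = f x * χ h) (hφ : φ ∈ inducedSubspace H χ) (h : H) (y : G) :
    cosetConv H f φ (h * y) = χ h * cosetConv H f φ y := by
  rw [cosetConv_eq_sum_mul_out hf hφ h, cosetConv, Finset.mul_sum]
  refine Finset.sum_congr rfl fun q _ => ?_
  simp only [hfL h q.out, mul_inv_rev, mul_assoc, inv_mul_cancel_left]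

theorem cosetConv_mul_right (f : G → ℂ) {φ : G → ℂ} (hφ : ∀ x (h : H), φ (x * h) = φ x * χ h)
    (y : G) (h : H) : cosetConv H f φ (y * h) = cosetConv H f φ y * χ h := by
  simp only [cosetConv, Finset.sum_mul, ← mul_assoc, hφ]

theorem cosetConv_mem_inducedSubspace {f φ : G → ℂ} (hfL : f ∈ inducedSubspace H χ)
    (hf : ∀ x (h : H), f (x * h) = f x * χ h) (hφ : φ ∈ inducedSubspace H χ) :
    cosetConv H f φ ∈ inducedSubspace H χ :=
  cosetConv_mul_left hfL hf hφ

theorem isLocallyConstant_cosetConv [TopologicalSpace G] [ContinuousMul G] (f : G → ℂ)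
    {φ : G → ℂ} (hφ : IsLocallyConstant φ) : IsLocallyConstant (cosetConv H f φ) :=
  IsLocallyConstant.finset_sum _ fun q _ =>
    (hφ.comp_continuous (continuous_const_mul _)).comp (f q.out * ·)

theorem cosetConv_mem_heckeSet [TopologicalSpace G] [ContinuousMul G] {f f' : G → ℂ}
    (hf : f ∈ heckeSet H χ) (hf' : f' ∈ heckeSet H χ) : cosetConv H f f' ∈ heckeSet H χ := by
  refine ⟨isLocallyConstant_cosetConv f hf'.1, fun h₁ h₂ x => ?_⟩
  rw [mul_assoc (h₁ : G), cosetConv_mul_left (mem_inducedSubspace_of_mem_heckeSet hf)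
    (apply_mul_of_mem_heckeSet hf) (mem_inducedSubspace_of_mem_heckeSet hf'),
    cosetConv_mul_right f (apply_mul_of_mem_heckeSet hf'), mul_assoc]

theorem chiDot_cosetConv {φ : G → ℂ} (hφ : φ ∈ inducedSubspace H χ) :
    cosetConv H (chiDot H χ) φ = φ := by
  funext y
  rw [cosetConv, sum_out_eq_apply_one_of_invariant (F := fun x => chiDot H χ x * φ (x⁻¹ * y))
    (conv_integrand_invariant chiDot_mul_right hφ y) fun x hx => by simp [chiDot_of_notMem hx]]
  simp [chiDot_one]

theorem cosetConv_chiDot {f : G → ℂ} (hf : ∀ x (h : H), f (x * h) = f x * χ h) :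
    cosetConv H f (chiDot H χ) = f := by
  funext y
  have hF := conv_integrand_invariant hf chiDot_mem_inducedSubspace y
  rw [cosetConv_eq_sum_mul_out hf chiDot_mem_inducedSubspace y,
    sum_out_eq_apply_one_of_invariant (F := fun x => f (y * x) * chiDot H χ ((y * x)⁻¹ * y))
      (fun x h hh => by simpa [mul_assoc] using hF (y * x) h hh)
      fun x hx => by simp [chiDot_of_notMem (H.inv_mem_iff.not.2 hx)]]
  simp [chiDot_one]

theorem cosetConv_assoc {f f' φ : G → ℂ} (hf' : ∀ x (h : H), f' (x * h) = f' x * χ h)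
    (hφ : φ ∈ inducedSubspace H χ) :
    cosetConv H (cosetConv H f f') φ = cosetConv H f (cosetConv H f' φ) := by
  funext y
  have hinner (p : G ⧸ H) : cosetConv H f' φ (p.out⁻¹ * y)
      = ∑ q : G ⧸ H, f' (p.out⁻¹ * q.out) * φ (q.out⁻¹ * y) := by
    simp [cosetConv_eq_sum_mul_out hf' hφ p.out⁻¹, mul_assoc]
  show ∑ q : G ⧸ H, cosetConv H f f' q.out * φ (q.out⁻¹ * y)
    = ∑ p : G ⧸ H, f p.out * cosetConv H f' φ (p.out⁻¹ * y)
  simp only [hinner]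
  simp only [cosetConv, Finset.sum_mul, Finset.mul_sum, mul_assoc]
  exact Finset.sum_comm

theorem cosetConv_smul_add (c : ℂ) (f f' φ : G → ℂ) :
    cosetConv H (c • f + f') φ = c • cosetConv H f φ + cosetConv H f' φ := by
  funext y
  simp only [cosetConv, Pi.add_apply, Pi.smul_apply, smul_eq_mul, Finset.mul_sum,
    ← Finset.sum_add_distrib, add_mul, mul_assoc]

end Convolution

section Integration

variable {G : Type*} [Group G] [MeasurableSpace G] [MeasurableMul G] {μ : Measure G}
  [μ.IsMulLeftInvariant] {H : Subgroup G}

theorem measure_preimage_mk_singleton (q : G ⧸ H) :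
    μ (QuotientGroup.mk ⁻¹' {q}) = μ H := by
  rw [preimage_mk_singleton_eq, measure_preimage_mul]

variable [Fintype (G ⧸ H)] {E : Type*} [NormedAddCommGroup E] [NormedSpace ℝ E]
  [CompleteSpace E]

theorem integral_eq_sum_out_of_invariant (hH : MeasurableSet (H : Set G)) (hμH : μ H ≠ ⊤)
    {F : G → E} (hF : ∀ x, ∀ h ∈ H, F (x * h) = F x) :
    ∫ x, F x ∂μ = μ.real H • ∑ q : G ⧸ H, F q.out := by
  have hmeas (q : G ⧸ H) : MeasurableSet (QuotientGroup.mk ⁻¹' {q} : Set G) := by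
    rw [preimage_mk_singleton_eq]
    exact measurable_const_mul _ hH
  have hconst (q : G ⧸ H) : Set.EqOn F (fun _ => F q.out) (QuotientGroup.mk ⁻¹' {q}) := by
    rintro x rfl
    exact (apply_out_mk_of_invariant hF x).symm
  calc ∫ x, F x ∂μ = ∫ x in ⋃ q : G ⧸ H, QuotientGroup.mk ⁻¹' {q}, F x ∂μ := by
        rw [← Set.preimage_iUnion, Set.iUnion_of_singleton, Set.preimage_univ, setIntegral_univ]
    _ = ∑ q : G ⧸ H, ∫ x in QuotientGroup.mk ⁻¹' {q}, F x ∂μ :=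
        integral_iUnion_fintype hmeas
          (fun p q hpq => (Set.disjoint_singleton.2 hpq).preimage _) fun q =>
          (integrableOn_const (by rwa [measure_preimage_mk_singleton])).congr_fun
            (hconst q).symm (hmeas q)
    _ = μ.real H • ∑ q : G ⧸ H, F q.out := by
        rw [Finset.smul_sum]
        refine Finset.sum_congr rfl fun q _ => ?_
        rw [setIntegral_congr_fun (hmeas q) (hconst q), setIntegral_const, measureReal_def,
          measure_preimage_mk_singleton, measureReal_def]

theorem heckeConv_eq_cosetConv (hH : MeasurableSet (H : Set G)) (hμH : μ H = 1)
    {χ : H →* ℂˣ} {f φ : G → ℂ} (hf : ∀ x (h : H), f (x * h) = f x * χ h)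
    (hφ : φ ∈ inducedSubspace H χ) : heckeConv μ f φ = cosetConv H f φ := by
  funext y
  rw [heckeConv, integral_eq_sum_out_of_invariant hH (by simp [hμH])
    (conv_integrand_invariant hf hφ y), measureReal_def, hμH, ENNReal.toReal_one, one_smul]
  rfl

end Integration

theorem Complex.eq_one_of_forall_norm_pow_sub_one_lt {z : ℂ}
    (hz : ∀ n : ℕ, ‖z ^ n - 1‖ < 1 / 2) : z = 1 := by
  -- The real parts of `z ^ n` exceed `1/2`, while the geometric sums of `z ≠ 1` stay bounded.
  by_contra hz₁
  have hd : 0 < ‖z - 1‖ := norm_pos_iff.2 (sub_ne_zero.2 hz₁)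
  set N := ⌈‖z - 1‖⁻¹⌉₊
  have hlower : (N : ℝ) / 2 ≤ (∑ n ∈ Finset.range N, z ^ n).re := by
    rw [Complex.re_sum]
    calc (N : ℝ) / 2 = ∑ _n ∈ Finset.range N, (1 / 2 : ℝ) := by simp [div_eq_mul_inv]
      _ ≤ ∑ n ∈ Finset.range N, (z ^ n).re := Finset.sum_le_sum fun n _ => by
        have := (Complex.re_le_norm (1 - z ^ n)).trans_lt ((norm_sub_rev _ _).trans_lt (hz n))
        simp only [Complex.sub_re, Complex.one_re] at this
        linarith
  have hupper : (∑ n ∈ Finset.range N, z ^ n).re < N / 2 := by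
    rw [geom_sum_eq hz₁]
    calc ((z ^ N - 1) / (z - 1)).re ≤ ‖z ^ N - 1‖ / ‖z - 1‖ := by
          rw [← norm_div]; exact Complex.re_le_norm _
      _ < 1 / 2 / ‖z - 1‖ := div_lt_div_of_pos_right (hz N) hd
      _ ≤ N / 2 := by
          have := Nat.le_ceil ‖z - 1‖⁻¹
          rw [div_right_comm, one_div]
          linarith
  linarith

section Profinite

variable {G : Type*} [Group G] [TopologicalSpace G] [IsTopologicalGroup G]

theorem MonoidHom.isOpen_ker_of_continuous_val [CompactSpace G] [TotallyDisconnectedSpace G]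
    (χ : G →* ℂˣ) (hχ : Continuous fun g => (χ g : ℂ)) : IsOpen (χ.ker : Set G) := by
  set V := {g : G | ‖(χ g : ℂ) - 1‖ < 1 / 2}
  have hV : IsOpen V := isOpen_lt (hχ.sub continuous_const).norm continuous_const
  obtain ⟨K, hKV⟩ := ProfiniteGrp.exist_openNormalSubgroup_sub_open_nhds_of_one hV (by simp [V])
  refine Subgroup.isOpen_mono (H₁ := K.toSubgroup) (fun k hk => ?_) K.isOpen'
  refine χ.mem_ker.2 (Units.ext (Complex.eq_one_of_forall_norm_pow_sub_one_lt fun n => ?_))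
  simpa [V] using hKV (pow_mem hk n)

theorem isLocallyConstant_of_mul_right_invariant {α : Type*} {K : Subgroup G}
    (hK : IsOpen (K : Set G)) {F : G → α} (hF : ∀ x, ∀ k ∈ K, F (x * k) = F x) :
    IsLocallyConstant F := by
  have := QuotientGroup.discreteTopology hK
  have hF' : F = (fun q : G ⧸ K => F q.out) ∘ QuotientGroup.mk :=
    funext fun x => (apply_out_mk_of_invariant hF x).symm
  rw [hF']
  exact (IsLocallyConstant.of_discrete _).comp_continuous continuous_quotient_mk'

variable [CompactSpace G] [TotallyDisconnectedSpace G] {H : Subgroup G} {χ : H →* ℂˣ}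

theorem isLocallyConstant_chiDot (hH : IsOpen (H : Set G))
    (hχ : Continuous fun h : H => (χ h : ℂ)) : IsLocallyConstant (chiDot H χ) := by
  have : CompactSpace H := isCompact_iff_compactSpace.1 (H.isClosed_of_isOpen hH).isCompact
  have hK : IsOpen ((χ.ker.map H.subtype : Subgroup G) : Set G) := by
    rw [Subgroup.coe_map]
    exact hH.isOpenMap_subtype_val _ (χ.isOpen_ker_of_continuous_val hχ)
  refine isLocallyConstant_of_mul_right_invariant hK ?_
  rintro x _ ⟨k, hk, rfl⟩
  rw [Subgroup.coe_subtype, chiDot_mul_right, χ.mem_ker.1 hk, Units.val_one, mul_one]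

theorem chiDot_mem_heckeSet (hH : IsOpen (H : Set G)) (hχ : Continuous fun h : H => (χ h : ℂ)) :
    chiDot H χ ∈ heckeSet H χ :=
  ⟨isLocallyConstant_chiDot hH hχ, fun h₁ h₂ x => by rw [chiDot_mul_right, chiDot_mul_left]⟩

end Profinite

section InducedBasis

variable {G : Type*} [Group G] {H : Subgroup G} {χ : H →* ℂˣ}

variable (χ) in
noncomputable def inducedDelta (q : G ⧸ H) : inducedSubspace H χ :=
  ⟨fun x => chiDot H χ (x * q.out), fun h x => by
    simp only [mul_assoc, chiDot_mul_left]⟩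

theorem inducedDelta_apply (q : G ⧸ H) (x : G) :
    (inducedDelta χ q : G → ℂ) x = chiDot H χ (x * q.out) := rfl

theorem inducedDelta_apply_out_inv [DecidableEq (G ⧸ H)] (p q : G ⧸ H) :
    (inducedDelta χ q : G → ℂ) p.out⁻¹ = if p = q then 1 else 0 := by
  rw [inducedDelta_apply]
  split_ifs with hpq
  · rw [hpq, inv_mul_cancel, chiDot_one]
  · refine chiDot_of_notMem fun hmem => hpq ?_
    rw [← QuotientGroup.out_eq' p, ← QuotientGroup.out_eq' q]
    exact QuotientGroup.eq.2 hmem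

variable [Fintype (G ⧸ H)]

theorem eq_sum_mul_chiDot_of_mem_inducedSubspace {φ : G → ℂ} (hφ : φ ∈ inducedSubspace H χ)
    (x : G) : φ x = ∑ q : G ⧸ H, φ q.out⁻¹ * chiDot H χ (x * q.out) := by
  calc φ x = cosetConv H (chiDot H χ) φ x := by rw [chiDot_cosetConv hφ]
    _ = ∑ q : G ⧸ H, chiDot H χ (x * q.out) * φ ((x * q.out)⁻¹ * x) :=
        cosetConv_eq_sum_mul_out chiDot_mul_right hφ x x
    _ = ∑ q : G ⧸ H, φ q.out⁻¹ * chiDot H χ (x * q.out) := by simp [mul_comm]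

theorem sum_smul_inducedDelta (φ : inducedSubspace H χ) :
    ∑ q : G ⧸ H, (φ : G → ℂ) q.out⁻¹ • inducedDelta χ q = φ := by
  ext x
  simp only [Submodule.coe_sum, Submodule.coe_smul, Finset.sum_apply, Pi.smul_apply,
    smul_eq_mul, inducedDelta_apply]
  exact (eq_sum_mul_chiDot_of_mem_inducedSubspace φ.2 x).symm

variable (χ) in
noncomputable def inducedEquivFun : inducedSubspace H χ ≃ₗ[ℂ] (G ⧸ H → ℂ) where
  toFun φ q := (φ : G → ℂ) q.out⁻¹
  invFun c := ∑ q : G ⧸ H, c q • inducedDelta χ q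
  map_add' _ _ := rfl
  map_smul' _ _ := rfl
  left_inv := sum_smul_inducedDelta
  right_inv c := by
    classical
    funext p
    simp [inducedDelta_apply_out_inv]

variable (χ) in
noncomputable def inducedBasis : Module.Basis (G ⧸ H) ℂ (inducedSubspace H χ) :=
  .ofEquivFun (inducedEquivFun χ)

theorem inducedBasis_repr_apply (φ : inducedSubspace H χ) (q : G ⧸ H) :
    (inducedBasis χ).repr φ q = (φ : G → ℂ) q.out⁻¹ :=
  Module.Basis.ofEquivFun_repr_apply _ φ q

theorem inducedBasis_apply (q : G ⧸ H) : inducedBasis χ q = inducedDelta χ q := by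
  classical
  simp [inducedBasis, inducedEquivFun, Pi.single_apply]

theorem isLocallyConstant_of_mem_inducedSubspace [TopologicalSpace G] [ContinuousMul G]
    (hloc : IsLocallyConstant (chiDot H χ)) {φ : G → ℂ} (hφ : φ ∈ inducedSubspace H χ) :
    IsLocallyConstant φ := by
  rw [funext (eq_sum_mul_chiDot_of_mem_inducedSubspace hφ)]
  exact IsLocallyConstant.finset_sum _ fun q _ =>
    (hloc.comp_continuous (continuous_mul_const _)).comp (φ q.out⁻¹ * ·)

theorem trace_eq_zero_of_eq_cosetConv {f : G → ℂ} (hf₀ : ∀ x ∈ H, f x = 0)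
    (T : inducedSubspace H χ →ₗ[ℂ] inducedSubspace H χ)
    (hT : ∀ φ : inducedSubspace H χ, (T φ : G → ℂ) = cosetConv H f φ) :
    LinearMap.trace ℂ (inducedSubspace H χ) T = 0 := by
  classical
  rw [LinearMap.trace_eq_matrix_trace ℂ (inducedBasis χ), Matrix.trace]
  refine Finset.sum_eq_zero fun q _ => ?_
  rw [Matrix.diag_apply, LinearMap.toMatrix_apply, inducedBasis_repr_apply, hT, cosetConv]
  refine Finset.sum_eq_zero fun p _ => ?_
  rw [inducedBasis_apply, inducedDelta_apply, inv_mul_cancel_right]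
  by_cases hp : (p.out : G) ∈ H
  · rw [hf₀ _ hp, zero_mul]
  · rw [chiDot_of_notMem (H.inv_mem_iff.not.2 hp), mul_zero]

theorem exists_mem_heckeSet_eq_cosetConv [TopologicalSpace G] [ContinuousMul G]
    (hloc : IsLocallyConstant (chiDot H χ)) (T : inducedSubspace H χ →ₗ[ℂ] inducedSubspace H χ)
    (hT : ∀ (φ φ' : inducedSubspace H χ) (g : G),
      (∀ x, (φ' : G → ℂ) x = (φ : G → ℂ) (x * g)) →
      ∀ y, (T φ' : G → ℂ) y = (T φ : G → ℂ) (y * g)) :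
    ∃ f ∈ heckeSet H χ, ∀ φ : inducedSubspace H χ, (T φ : G → ℂ) = cosetConv H f φ := by
  set χDot : inducedSubspace H χ := ⟨chiDot H χ, chiDot_mem_inducedSubspace⟩
  set f : G → ℂ := (T χDot : G → ℂ)
  have hfR (y : G) (h : H) : f (y * h) = f y * χ h := by
    have := hT χDot ((χ h : ℂ) • χDot) h 
      (fun x => ((chiDot_mul_right x h).trans (mul_comm _ _)).symm) y
    rw [map_smul] at this
    exact this.symm.trans (mul_comm _ _)
  refine ⟨f, ⟨isLocallyConstant_of_mem_inducedSubspace hloc (T χDot).2, fun h₁ h₂ x => ?_⟩,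
    fun φ => funext fun y => ?_⟩
  · rw [hfR]
    exact congrArg (· * _) ((T χDot).2 h₁ x)
  calc (T φ : G → ℂ) y = ∑ q : G ⧸ H, (φ : G → ℂ) q.out⁻¹ * f (y * q.out) := by
        conv_lhs => rw [← sum_smul_inducedDelta φ]
        simp only [map_sum, map_smul, Submodule.coe_sum, Submodule.coe_smul, Finset.sum_apply,
          Pi.smul_apply, smul_eq_mul, hT χDot (inducedDelta χ _) _ fun _ => rfl]
        rfl
    _ = cosetConv H f φ y := by
        rw [cosetConv_eq_sum_mul_out hfR φ.2 y]
        simp [mul_comm]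

end InducedBasis

theorem hecke_algebra_iso_equivariant_endomorphisms_general
    {G : Type*} [Group G] [TopologicalSpace G] [IsTopologicalGroup G]
    [CompactSpace G] [TotallyDisconnectedSpace G]
    [MeasurableSpace G] [BorelSpace G]
    (μ : Measure G) [μ.IsHaarMeasure]
    (H : Subgroup G) (hHopen : IsOpen (H : Set G)) (hμH : μ (H : Set G) = 1)
    (χ : H →* ℂˣ) (hχ : Continuous fun h : H => (χ h : ℂ)) :
    (chiDot H χ ∈ heckeSet H χ) ∧
    (∀ f ∈ heckeSet H χ, ∀ f' ∈ heckeSet H χ, heckeConv μ f f' ∈ heckeSet H χ) ∧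
    (∀ f ∈ heckeSet H χ, ∀ φ ∈ inducedSubspace H χ,
        heckeConv μ f φ ∈ inducedSubspace H χ) ∧
    (∀ f ∈ heckeSet H χ, ∀ φ ∈ inducedSubspace H χ, ∀ g y : G,
        heckeConv μ f (fun x => φ (x * g)) y = heckeConv μ f φ (y * g)) ∧
    (∀ f ∈ heckeSet H χ, ∀ f' ∈ heckeSet H χ, ∀ c : ℂ, ∀ φ ∈ inducedSubspace H χ,
        heckeConv μ (c • f + f') φ = c • heckeConv μ f φ + heckeConv μ f' φ) ∧
    (∀ φ ∈ inducedSubspace H χ, heckeConv μ (chiDot H χ) φ = φ) ∧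
    (∀ f ∈ heckeSet H χ, ∀ f' ∈ heckeSet H χ, ∀ φ ∈ inducedSubspace H χ,
        heckeConv μ (heckeConv μ f f') φ = heckeConv μ f (heckeConv μ f' φ)) ∧
    (∀ f ∈ heckeSet H χ,
        (∀ φ ∈ inducedSubspace H χ, heckeConv μ f φ = 0) → f = 0) ∧
    (∀ T : inducedSubspace H χ →ₗ[ℂ] inducedSubspace H χ,
        (∀ (φ φ' : inducedSubspace H χ) (g : G),
            (∀ x, (φ' : G → ℂ) x = (φ : G → ℂ) (x * g)) →
            ∀ y, (T φ' : G → ℂ) y = (T φ : G → ℂ) (y * g)) →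
        ∃ f ∈ heckeSet H χ, ∀ (φ : inducedSubspace H χ) (y : G),
          (T φ : G → ℂ) y = heckeConv μ f (φ : G → ℂ) y) ∧
    (∀ f ∈ heckeSet H χ, (∀ x ∈ H, f x = 0) →
        ∀ T : inducedSubspace H χ →ₗ[ℂ] inducedSubspace H χ,
          (∀ (φ : inducedSubspace H χ) (y : G),
              (T φ : G → ℂ) y = heckeConv μ f (φ : G → ℂ) y) →
          LinearMap.trace ℂ (inducedSubspace H χ) T = 0) := by
  have := H.quotient_finite_of_isOpen hHopen
  have := Fintype.ofFinite (G ⧸ H)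
  have hconv {f φ : G → ℂ} (hf : ∀ x (h : H), f (x * h) = f x * χ h)
      (hφ : φ ∈ inducedSubspace H χ) : heckeConv μ f φ = cosetConv H f φ :=
    heckeConv_eq_cosetConv hHopen.measurableSet hμH hf hφ
  have hR {f : G → ℂ} (hf : f ∈ heckeSet H χ) := apply_mul_of_mem_heckeSet hf
  have hL {f : G → ℂ} (hf : f ∈ heckeSet H χ) := mem_inducedSubspace_of_mem_heckeSet hf
  refine ⟨chiDot_mem_heckeSet hHopen hχ, fun f hf f' hf' => ?_, fun f hf φ hφ => ?_,
    fun f _ φ _ g y => by simp only [heckeConv, mul_assoc], fun f hf f' hf' c φ hφ => ?_,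
    fun φ hφ => ?_, fun f hf f' hf' φ hφ => ?_, fun f hf hf₀ => ?_, fun T hT => ?_,
    fun f hf hf₀ T hT => ?_⟩
  · rw [hconv (hR hf) (hL hf')]
    exact cosetConv_mem_heckeSet hf hf'
  · rw [hconv (hR hf) hφ]
    exact cosetConv_mem_inducedSubspace (hL hf) (hR hf) hφ
  · have hsum (x : G) (h : H) : (c • f + f') (x * h) = (c • f + f') x * χ h := by
      simp only [Pi.add_apply, Pi.smul_apply, smul_eq_mul, hR hf, hR hf', add_mul, mul_assoc]
    rw [hconv hsum hφ, hconv (hR hf) hφ, hconv (hR hf') hφ, cosetConv_smul_add]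
  · rw [hconv chiDot_mul_right hφ, chiDot_cosetConv hφ]
  · rw [hconv (hR hf) (hL hf'), hconv (hR (cosetConv_mem_heckeSet hf hf')) hφ, hconv (hR hf') hφ,
      hconv (hR hf) (cosetConv_mem_inducedSubspace (hL hf') (hR hf') hφ),
      cosetConv_assoc (hR hf') hφ]
  · rw [← cosetConv_chiDot (hR hf), ← hconv (hR hf) chiDot_mem_inducedSubspace,
      hf₀ _ chiDot_mem_inducedSubspace]
  · obtain ⟨f, hf, hTf⟩ :=
      exists_mem_heckeSet_eq_cosetConv (isLocallyConstant_chiDot hHopen hχ) T hT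
    exact ⟨f, hf, fun φ y => by rw [hTf, hconv (hR hf) φ.2]⟩
  · refine trace_eq_zero_of_eq_cosetConv hf₀ T fun φ => ?_
    rw [← hconv (hR hf) φ.2]
    exact funext (hT φ)

/-- Let `G` be a profinite group, `H` an open subgroup, `μ` the Haar measure with
`μ(H) = 1`, and `χ : H → ℂˣ` a continuous homomorphism.  Then the map `Θ` sending
`f` in the Hecke algebra `𝓗` to the endomorphism `φ ↦ f ⋆ φ` of the induced
representation `U` is an isomorphism of `ℂ`-algebras onto `End_G(U)`, the algebra of
`G`-equivariant linear endomorphisms of `U`; moreover every `f ∈ 𝓗` vanishing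
identically on `H` acts on `U` as a trace-zero endomorphism.  (The conjunction below
states: `𝓗` contains `χ̇` and is closed under convolution; `Θ(f)` preserves `U` and
commutes with right translation; `Θ` is `ℂ`-linear, unital, multiplicative,
injective, and surjective onto the `G`-equivariant endomorphisms; and the trace-zero
property.) -/
theorem hecke_algebra_iso_equivariant_endomorphisms
    {G : Type*} [Group G] [TopologicalSpace G] [IsTopologicalGroup G]
    [CompactSpace G] [T2Space G] [TotallyDisconnectedSpace G]
    [MeasurableSpace G] [BorelSpace G]
    (μ : Measure G) [μ.IsHaarMeasure]
    (H : Subgroup G) (hHopen : IsOpen (H : Set G)) (hμH : μ (H : Set G) = 1)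
    (χ : H →* ℂˣ) (hχ : Continuous fun h : H => (χ h : ℂ)) :
    (chiDot H χ ∈ heckeSet H χ) ∧
    (∀ f ∈ heckeSet H χ, ∀ f' ∈ heckeSet H χ, heckeConv μ f f' ∈ heckeSet H χ) ∧
    (∀ f ∈ heckeSet H χ, ∀ φ ∈ inducedSubspace H χ,
        heckeConv μ f φ ∈ inducedSubspace H χ) ∧
    (∀ f ∈ heckeSet H χ, ∀ φ ∈ inducedSubspace H χ, ∀ g y : G,
        heckeConv μ f (fun x => φ (x * g)) y = heckeConv μ f φ (y * g)) ∧
    (∀ f ∈ heckeSet H χ, ∀ f' ∈ heckeSet H χ, ∀ c : ℂ, ∀ φ ∈ inducedSubspace H χ,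
        heckeConv μ (c • f + f') φ = c • heckeConv μ f φ + heckeConv μ f' φ) ∧
    (∀ φ ∈ inducedSubspace H χ, heckeConv μ (chiDot H χ) φ = φ) ∧
    (∀ f ∈ heckeSet H χ, ∀ f' ∈ heckeSet H χ, ∀ φ ∈ inducedSubspace H χ,
        heckeConv μ (heckeConv μ f f') φ = heckeConv μ f (heckeConv μ f' φ)) ∧
    (∀ f ∈ heckeSet H χ,
        (∀ φ ∈ inducedSubspace H χ, heckeConv μ f φ = 0) → f = 0) ∧
    (∀ T : inducedSubspace H χ →ₗ[ℂ] inducedSubspace H χ,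
        (∀ (φ φ' : inducedSubspace H χ) (g : G),
            (∀ x, (φ' : G → ℂ) x = (φ : G → ℂ) (x * g)) →
            ∀ y, (T φ' : G → ℂ) y = (T φ : G → ℂ) (y * g)) →
        ∃ f ∈ heckeSet H χ, ∀ (φ : inducedSubspace H χ) (y : G),
          (T φ : G → ℂ) y = heckeConv μ f (φ : G → ℂ) y) ∧
    (∀ f ∈ heckeSet H χ, (∀ x ∈ H, f x = 0) →
        ∀ T : inducedSubspace H χ →ₗ[ℂ] inducedSubspace H χ,
          (∀ (φ : inducedSubspace H χ) (y : G),
              (T φ : G → ℂ) y = heckeConv μ f (φ : G → ℂ) y) →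
          LinearMap.trace ℂ (inducedSubspace H χ) T = 0) :=
  hecke_algebra_iso_equivariant_endomorphisms_general μ H hHopen hμH χ hχ
end
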